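/- arXiv:1909.07235 — 5 statements merged into one kernel-verified Lean document; each statement's English description precedes it below -/
import Mathlib

section
/- For a simple graph G, the skew throttling number th_-(G) equals 1 if and only if G is isomorphic to K_1 (a single vertex) or to rK_2 (the disjoint union of r ≥ 1 copies of K_2). -/
open SimpleGraph

/-- One round of skew zero forcing: every vertex (blue or white) with exactly one
white neighbor colors that neighbor blue. -/
def skewStep {V : Type*} (G : SimpleGraph V) (B : Set V) : Set V :=
  B ∪ {w | ∃ v, G.Adj v w ∧ ∀ u, G.Adj v u → u ∉ B → u = w}

/-- The set of blue vertices after `n` rounds of skew zero forcing starting from `S`. -/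
def skewIter {V : Type*} (G : SimpleGraph V) (S : Set V) : ℕ → Set V
  | 0 => S
  | n + 1 => skewStep G (skewIter G S n)

/-- `S` is a skew zero forcing set of `G`. -/
def IsSkewZFS {V : Type*} (G : SimpleGraph V) (S : Set V) : Prop :=
  ∃ n, skewIter G S n = Set.univ

/-- The skew propagation time `pt₋(G;S)`: the number of rounds needed for all
vertices to become blue. -/
noncomputable def skewPt {V : Type*} (G : SimpleGraph V) (S : Set V) : ℕ :=
  sInf {n | skewIter G S n = Set.univ}

/-- The skew throttling number `th₋(G)`. -/
noncomputable def skewTh {V : Type*} (G : SimpleGraph V) : ℕ :=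
  sInf {m | ∃ S : Set V, IsSkewZFS G S ∧ m = S.ncard + skewPt G S}

/-- The skew throttling number over sets of size `k`, `th₋(G,k)`. -/
noncomputable def skewThK {V : Type*} (G : SimpleGraph V) (k : ℕ) : ℕ :=
  sInf {m | ∃ S : Set V, IsSkewZFS G S ∧ S.ncard = k ∧ m = S.ncard + skewPt G S}

/-- The skew zero forcing number `Z₋(G)`. -/
noncomputable def skewZ {V : Type*} (G : SimpleGraph V) : ℕ :=
  sInf {m | ∃ S : Set V, IsSkewZFS G S ∧ m = S.ncard}

/-- The skew propagation time `pt₋(G)`: minimum propagation time over minimum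
skew zero forcing sets. -/
noncomputable def skewPtMin {V : Type*} (G : SimpleGraph V) : ℕ :=
  sInf {m | ∃ S : Set V, IsSkewZFS G S ∧ S.ncard = skewZ G ∧ m = skewPt G S}

/-- `rK₂`: the disjoint union of `r` copies of `K₂`. -/
def rK2 (r : ℕ) : SimpleGraph (Fin r × Fin 2) :=
  SimpleGraph.fromRel (fun a b => a.1 = b.1)

/-- Disjoint union of two simple graphs. -/
def disjUnion {α β : Type*} (G : SimpleGraph α) (H : SimpleGraph β) :
    SimpleGraph (α ⊕ β) :=
  SimpleGraph.fromRel (fun x y =>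
    match x, y with
    | Sum.inl a, Sum.inl b => G.Adj a b
    | Sum.inr a, Sum.inr b => H.Adj a b
    | _, _ => False)

/-- The corona `G ∘ K₁`: attach a pendant leaf to every vertex of `G`. -/
def coronaK1 {α : Type*} (G : SimpleGraph α) : SimpleGraph (α ⊕ α) :=
  SimpleGraph.fromRel (fun x y =>
    match x, y with
    | Sum.inl a, Sum.inl b => G.Adj a b
    | Sum.inl a, Sum.inr b => a = b
    | _, _ => False)

/-- The corona `G ∘ K₂`: attach a private copy of `K₂` (a triangle) to every
vertex of `G`. -/
def coronaK2 {α : Type*} (G : SimpleGraph α) : SimpleGraph (α ⊕ α × Fin 2) :=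
  SimpleGraph.fromRel (fun x y =>
    match x, y with
    | Sum.inl a, Sum.inl b => G.Adj a b
    | Sum.inl a, Sum.inr b => a = b.1
    | Sum.inr a, Sum.inr b => a.1 = b.1
    | _, _ => False)

/-- The graph `H(s,t)` with hub `b`, pendant paths `b xᵢ yᵢ` and triangles `b zᵢ wᵢ`. -/
def Hgraph (s t : ℕ) : SimpleGraph (Unit ⊕ ((Fin s × Fin 2) ⊕ (Fin t × Fin 2))) :=
  SimpleGraph.fromRel (fun x y =>
    match x, y with
    | Sum.inl _, Sum.inr (Sum.inl p) => p.2 = 0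
    | Sum.inl _, Sum.inr (Sum.inr _) => True
    | Sum.inr (Sum.inl p), Sum.inr (Sum.inl q) => p.1 = q.1
    | Sum.inr (Sum.inr p), Sum.inr (Sum.inr q) => p.1 = q.1
    | _, _ => False)

/-- The friendship graph `Fₙ`: a universal vertex joined to `n` disjoint copies of `K₂`. -/
def friendshipGraph (n : ℕ) : SimpleGraph (Unit ⊕ (Fin n × Fin 2)) :=
  SimpleGraph.fromRel (fun x y =>
    match x, y with
    | Sum.inl _, Sum.inr _ => True
    | Sum.inr p, Sum.inr q => p.1 = q.1
    | _, _ => False)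

/-- The balanced spider `T_{p,ℓ}`: a center with `p` legs of `ℓ` vertices each. -/
def spider (p ℓ : ℕ) : SimpleGraph (Unit ⊕ (Fin p × Fin ℓ)) :=
  SimpleGraph.fromRel (fun x y =>
    match x, y with
    | Sum.inl _, Sum.inr q => q.2.val = 0
    | Sum.inr q, Sum.inr q' => q.1 = q'.1 ∧ q'.2.val = q.2.val + 1
    | _, _ => False)

/-- The hypercube graph `Qₙ`: binary strings of length `n`, adjacent iff they
differ in exactly one coordinate. -/
def hypercube (n : ℕ) : SimpleGraph (Fin n → Bool) :=
  SimpleGraph.fromRel (fun x y => ∃! i, x i ≠ y i)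
/-!
Since `pt₋(G;S) = 0` forces `S = V`, the value `|S| + pt₋(G;S) = 0` occurs only for the empty
graph, and the value `1` only for `S = V` with `|V| = 1`, or for `S = ∅` with one round coloring
every vertex. In the latter case every vertex `w` is the only neighbour of some `v`; then `v` is
the only neighbour of `w`, because the vertex forcing `v` is a neighbour of `v`, hence is `w`.
So every vertex has exactly one neighbour, and splitting `V` into the pairs `{v, partner v}`
identifies `G` with `rK₂`.
-/

open Function

theorem Nat.sInf_eq_one_iff {s : Set ℕ} : sInf s = 1 ↔ 1 ∈ s ∧ 0 ∉ s := by
  constructor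
  · intro h
    have hne : s.Nonempty := Set.nonempty_iff_ne_empty.2 fun he => by simp [he] at h
    exact ⟨h ▸ Nat.sInf_mem hne, fun h0 => by simpa [h] using Nat.sInf_le h0⟩
  · rintro ⟨h1, h0⟩
    have hpos : sInf s ≠ 0 := fun h => by
      rcases Nat.sInf_eq_zero.1 h with h | h
      · exact h0 h
      · simp [h] at h1
    have := Nat.sInf_le h1
    omega

section Involution

variable {V : Type*} {m : V → V}

theorem Function.Involutive.exists_set_apply_mem_iff_notMem (hm : Involutive m)
    (hfix : ∀ v, m v ≠ v) : ∃ A : Set V, ∀ v, m v ∈ A ↔ v ∉ A := by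
  classical
  let : LinearOrder V := linearOrderOfSTO WellOrderingRel
  refine ⟨{v | v < m v}, fun v => ?_⟩
  simp only [Set.mem_ofPred_eq, hm v, not_lt]
  exact ⟨le_of_lt, fun h => lt_of_le_of_ne h (hfix v)⟩

noncomputable def Function.Involutive.equivProdFinTwo (hm : Involutive m) (A : Set V)
    (hA : ∀ v, m v ∈ A ↔ v ∉ A) : V ≃ A × Fin 2 :=
  open Classical in
  { toFun := fun v => if h : v ∈ A then (⟨v, h⟩, 0) else (⟨m v, (hA v).2 h⟩, 1)
    invFun := fun p => if p.2 = 0 then p.1 else m p.1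
    left_inv := fun v => by
      by_cases h : v ∈ A <;> simp [h, hm v]
    right_inv := by
      rintro ⟨⟨a, ha⟩, i⟩
      have hma : m a ∉ A := (hA (m a)).1 (by rwa [hm a])
      fin_cases i
      · simp [ha]
      · simp [hma, hm a] }

theorem Function.Involutive.equivProdFinTwo_apply_apply (hm : Involutive m) (A : Set V)
    (hA : ∀ v, m v ∈ A ↔ v ∉ A) (v : V) :
    hm.equivProdFinTwo A hA (m v) =
      ((hm.equivProdFinTwo A hA v).1, (hm.equivProdFinTwo A hA v).2.rev) := by
  by_cases h : v ∈ A
  · have hmv : m v ∉ A := fun hmv => (hA v).1 hmv h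
    simp [equivProdFinTwo, h, hmv, hm v]
  · simp [equivProdFinTwo, h, (hA v).2 h]

theorem Function.Involutive.exists_equiv_prod_fin_two [Finite V] (hm : Involutive m)
    (hfix : ∀ v, m v ≠ v) :
    ∃ (r : ℕ) (f : V ≃ Fin r × Fin 2), ∀ v, f (m v) = ((f v).1, (f v).2.rev) := by
  obtain ⟨A, hA⟩ := hm.exists_set_apply_mem_iff_notMem hfix
  refine ⟨Nat.card A, (hm.equivProdFinTwo A hA).trans
    ((Finite.equivFin A).prodCongr (Equiv.refl _)), fun v => ?_⟩
  simp only [Equiv.trans_apply, hm.equivProdFinTwo_apply_apply, Equiv.prodCongr_apply,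
    Prod.map, Equiv.refl_apply]

end Involution

theorem rK2_adj_iff {r : ℕ} (a b : Fin r × Fin 2) : (rK2 r).Adj a b ↔ b = (a.1, a.2.rev) := by
  obtain ⟨i, j⟩ := a
  obtain ⟨k, l⟩ := b
  simp only [rK2, fromRel_adj, ne_eq, Prod.mk.injEq, eq_comm (a := i)]
  fin_cases j <;> fin_cases l <;> simp

theorem rK2_existsUnique_adj {r : ℕ} (a : Fin r × Fin 2) : ∃! b, (rK2 r).Adj a b := by
  simp only [rK2_adj_iff, existsUnique_eq]

section Graph

variable {V W : Type*}

theorem SimpleGraph.Iso.existsUnique_adj {G : SimpleGraph V} {H : SimpleGraph W} (f : G ≃g H)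
    (h : ∀ w, ∃! u, H.Adj w u) (v : V) : ∃! u, G.Adj v u :=
  (f.toEquiv.existsUnique_congr fun _ => f.map_adj_iff.symm).2 (h (f v))

variable (G : SimpleGraph V)

theorem exists_iso_rK2_of_existsUnique_adj [Finite V] (h : ∀ v, ∃! w, G.Adj v w) :
    ∃ r, Nonempty (G ≃g rK2 r) := by
  choose m hm using h
  have hadj : ∀ v w, G.Adj v w ↔ w = m v := fun v w => ⟨(hm v).2 w, fun h => h ▸ (hm v).1⟩
  have hinv : Involutive m := fun v => ((hadj _ _).1 ((hadj _ _).2 rfl).symm).symm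
  obtain ⟨r, f, hf⟩ := hinv.exists_equiv_prod_fin_two fun v => (hm v).1.ne.symm
  exact ⟨r, ⟨f, fun {v w} => by rw [rK2_adj_iff, hadj, ← hf, f.apply_eq_iff_eq]⟩⟩

theorem exists_iso_rK2_iff [Finite V] :
    (∃ r, 1 ≤ r ∧ Nonempty (G ≃g rK2 r)) ↔ Nonempty V ∧ ∀ v, ∃! w, G.Adj v w := by
  constructor
  · rintro ⟨r, hr, ⟨f⟩⟩
    exact ⟨⟨f.symm (⟨0, hr⟩, 0)⟩, f.existsUnique_adj rK2_existsUnique_adj⟩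
  · rintro ⟨⟨v⟩, h⟩
    obtain ⟨r, ⟨f⟩⟩ := exists_iso_rK2_of_existsUnique_adj G h
    exact ⟨r, Nat.pos_of_ne_zero fun hr => by subst hr; exact (f v).1.elim0, ⟨f⟩⟩

theorem nonempty_iso_bot_fin_one_iff :
    Nonempty (G ≃g (⊥ : SimpleGraph (Fin 1))) ↔ Nat.card V = 1 := by
  refine ⟨fun ⟨f⟩ => by simp [Nat.card_congr f.toEquiv], fun h => ?_⟩
  obtain ⟨_, ⟨v⟩⟩ := Nat.card_eq_one_iff_unique.1 h
  have : Unique V := uniqueOfSubsingleton v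
  exact ⟨⟨Equiv.ofUnique .., fun {a b} => by simp [Subsingleton.elim a b]⟩⟩

end Graph

section SkewForcing

variable {V : Type*} (G : SimpleGraph V)

theorem skewStep_empty_eq_univ_iff :
    skewStep G ∅ = Set.univ ↔ ∀ v, ∃! w, G.Adj v w := by
  simp only [Set.eq_univ_iff_forall, skewStep, Set.empty_union, Set.mem_ofPred_eq,
    Set.notMem_empty, not_false_eq_true, forall_const]
  constructor
  · intro h x
    obtain ⟨y, hyx, hy⟩ := h x
    refine ⟨y, hyx.symm, fun u hu => ?_⟩
    obtain ⟨z, hzy, hz⟩ := h y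
    obtain rfl := hy z hzy.symm
    exact hz u hu
  · intro h w
    obtain ⟨v, hwv, -⟩ := h w
    exact ⟨v, hwv.symm, fun u hu => (h v).unique hu hwv.symm⟩

variable {G} {S : Set V}

theorem skewPt_eq_zero_iff (hS : IsSkewZFS G S) : skewPt G S = 0 ↔ S = Set.univ := by
  rw [skewPt, Nat.sInf_eq_zero]
  exact or_iff_left (Set.nonempty_iff_ne_empty.1 hS)

theorem skewPt_eq_one_iff : skewPt G S = 1 ↔ skewStep G S = Set.univ ∧ S ≠ Set.univ :=
  Nat.sInf_eq_one_iff

variable (G)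

theorem exists_skewZFS_ncard_add_skewPt_eq_zero_iff [Finite V] :
    (∃ S, IsSkewZFS G S ∧ 0 = S.ncard + skewPt G S) ↔ IsEmpty V := by
  constructor
  · rintro ⟨S, hS, h0⟩
    have hS_univ := (skewPt_eq_zero_iff hS).1 (by omega)
    rw [← Set.univ_eq_empty_iff, ← hS_univ, ← Set.ncard_eq_zero]
    omega
  · intro hV
    have hempty : (∅ : Set V) = Set.univ := (Set.univ_eq_empty_iff.2 hV).symm
    have hS : IsSkewZFS G ∅ := ⟨0, hempty⟩
    exact ⟨∅, hS, by rw [(skewPt_eq_zero_iff hS).2 hempty, Set.ncard_empty]⟩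

theorem exists_skewZFS_ncard_add_skewPt_eq_one_iff [Finite V] :
    (∃ S, IsSkewZFS G S ∧ 1 = S.ncard + skewPt G S) ↔
      Nat.card V = 1 ∨ (Nonempty V ∧ ∀ v, ∃! w, G.Adj v w) := by
  constructor
  · rintro ⟨S, hS, h1⟩
    rcases (by omega : S.ncard = 1 ∧ skewPt G S = 0 ∨ S.ncard = 0 ∧ skewPt G S = 1) with
      ⟨hcard, hpt⟩ | ⟨hcard, hpt⟩
    · rw [(skewPt_eq_zero_iff hS).1 hpt, Set.ncard_univ] at hcard
      exact Or.inl hcard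
    · rw [Set.ncard_eq_zero] at hcard
      subst hcard
      obtain ⟨hstep, hne⟩ := skewPt_eq_one_iff.1 hpt
      have hV : Nonempty V := not_isEmpty_iff.1 fun hV => hne (Set.univ_eq_empty_iff.2 hV).symm
      exact Or.inr ⟨hV, (skewStep_empty_eq_univ_iff G).1 hstep⟩
  · rintro (hcard | ⟨hV, h⟩)
    · have hS : IsSkewZFS G Set.univ := ⟨0, rfl⟩
      exact ⟨Set.univ, hS, by rw [(skewPt_eq_zero_iff hS).2 rfl, Set.ncard_univ, hcard]⟩
    · have hstep := (skewStep_empty_eq_univ_iff G).2 h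
      exact ⟨∅, ⟨1, hstep⟩, by
        rw [skewPt_eq_one_iff.2 ⟨hstep, Set.empty_ne_univ⟩, Set.ncard_empty]⟩

theorem skewTh_eq_one_iff_of_finite [Finite V] :
    skewTh G = 1 ↔ Nat.card V = 1 ∨ (Nonempty V ∧ ∀ v, ∃! w, G.Adj v w) := by
  rw [skewTh, Nat.sInf_eq_one_iff, Set.mem_ofPred_eq, Set.mem_ofPred_eq,
    exists_skewZFS_ncard_add_skewPt_eq_one_iff, exists_skewZFS_ncard_add_skewPt_eq_zero_iff,
    not_isEmpty_iff]
  have : Nat.card V = 1 → Nonempty V := fun h => (Nat.card_pos_iff.1 (by omega)).1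
  tauto

end SkewForcing

/-- `th₋(G) = 1` iff `G ≅ K₁` or `G ≅ rK₂` for some `r ≥ 1`. -/
theorem skewTh_eq_one_iff {V : Type*} [Fintype V] (G : SimpleGraph V) :
    skewTh G = 1 ↔
      (Nonempty (G ≃g (⊥ : SimpleGraph (Fin 1))) ∨
        ∃ r : ℕ, 1 ≤ r ∧ Nonempty (G ≃g rK2 r)) := by
  rw [skewTh_eq_one_iff_of_finite, nonempty_iso_bot_fin_one_iff, exists_iso_rK2_iff]
end

section
/- A simple graph G satisfies th_-(G) = th_-(G,0) = 2 if and only if G is isomorphic to (Ĝ ∘ K_1) ⊔ rK_2, where Ĝ is a graph of order at least two each of whose connected components contains an edge, and r ≥ 0 is an integer. -/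
open SimpleGraph

/-!
After one round from `∅` exactly the neighbours of leaves are blue. In the second round a leaf
pendant at a non-leaf `u` can only be forced by `u`, so all other neighbours of `u` must already be
blue. Playing this off against the forcing of the remaining vertices shows that `∅` forces `G` in
two rounds iff every non-leaf has exactly one leaf neighbour, and not in one round iff moreover
some vertex is not a leaf. Such a graph is the disjoint union of its isolated edges and the corona
`Ĝ ∘ K₁` of the subgraph spanned by its non-leaves, in which every vertex has a second, non-leaf,
neighbour. Finally `th₋(G,0) = pt₋(G;∅)`, and nothing beats `2` once `G` has two vertices.
-/

open Set

section

variable {V W : Type*} {G : SimpleGraph V} {H : SimpleGraph W}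

theorem existsUnique_subtype_iff {s : Set V} {p : V → Prop} (h : ∀ v, p v → v ∈ s) :
    (∃! v : s, p v) ↔ ∃! v, p v :=
  ⟨fun ⟨v, hv, hu⟩ => ⟨v, hv, fun w hw => congrArg Subtype.val (hu ⟨w, h w hw⟩ hw)⟩,
    fun ⟨v, hv, hu⟩ => ⟨⟨v, h v hv⟩, hv, fun w hw => Subtype.ext (hu w hw)⟩⟩

theorem mem_skewStep {B : Set V} {x : V} :
    x ∈ skewStep G B ↔ x ∈ B ∨ ∃ v, G.Adj v x ∧ ∀ u, G.Adj v u → u ∉ B → u = x :=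
  Iff.rfl

theorem skewIter_mono (G : SimpleGraph V) (S : Set V) : Monotone (skewIter G S) :=
  monotone_nat_of_le_succ fun _ => subset_union_left

theorem IsSkewZFS.skewIter_skewPt {S : Set V} (h : IsSkewZFS G S) :
    skewIter G S (skewPt G S) = univ :=
  Nat.sInf_mem h

theorem skewPt_eq_succ_iff {S : Set V} {k : ℕ} :
    skewPt G S = k + 1 ↔ skewIter G S (k + 1) = univ ∧ skewIter G S k ≠ univ :=
  Nat.sInf_upward_closed_eq_succ_iff
    (fun _ _ hle h => eq_univ_of_univ_subset (h ▸ skewIter_mono G S hle)) k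

theorem SimpleGraph.Iso.skewStep_preimage (e : G ≃g H) (B : Set W) :
    skewStep G (e ⁻¹' B) = e ⁻¹' skewStep H B := by
  ext x
  simp only [mem_skewStep, mem_preimage]
  refine or_congr Iff.rfl (e.toEquiv.exists_congr fun {v} => ?_)
  refine and_congr e.map_adj_iff.symm (e.toEquiv.forall_congr fun {u} => ?_)
  simp [e.map_adj_iff, e.injective.eq_iff]

theorem SimpleGraph.Iso.skewIter_preimage (e : G ≃g H) (S : Set W) (n : ℕ) :
    skewIter G (e ⁻¹' S) n = e ⁻¹' skewIter H S n := by
  induction n with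
  | zero => rfl
  | succ n ih => rw [skewIter, skewIter, ih, e.skewStep_preimage]

theorem SimpleGraph.Iso.skewPt_preimage (e : G ≃g H) (S : Set W) :
    skewPt G (e ⁻¹' S) = skewPt H S := by
  simp only [skewPt, e.skewIter_preimage, preimage_eq_univ_iff, e.surjective.range_eq,
    univ_subset_iff]

theorem skewThK_zero [Finite V] (G : SimpleGraph V) : skewThK G 0 = skewPt G ∅ := by
  have hA : {m | ∃ S : Set V, IsSkewZFS G S ∧ S.ncard = 0 ∧ m = S.ncard + skewPt G S} =
      {m | IsSkewZFS G ∅ ∧ m = skewPt G ∅} := by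
    ext m
    constructor
    · rintro ⟨S, hZ, hS, rfl⟩
      obtain rfl : S = ∅ := (ncard_eq_zero).1 hS
      simpa using hZ
    · rintro ⟨hZ, rfl⟩
      exact ⟨∅, hZ, ncard_empty V, by simp⟩
  rw [skewThK, hA]
  by_cases hZ : IsSkewZFS G ∅
  · simp [hZ]
  · have : {n | skewIter G ∅ n = univ} = ∅ := eq_empty_of_forall_notMem fun n hn => hZ ⟨n, hn⟩
    simp [hZ, skewPt, this]

theorem skewTh_eq_two [Finite V] (hV : 2 ≤ Nat.card V) (h : skewPt G ∅ = 2) :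
    skewTh G = 2 := by
  have hZ : IsSkewZFS G ∅ := ⟨2, (skewPt_eq_succ_iff.1 h).1⟩
  refine le_antisymm (Nat.sInf_le ⟨∅, hZ, by simp [h]⟩) (le_csInf ⟨2, ∅, hZ, by simp [h]⟩ ?_)
  rintro _ ⟨S, hS, rfl⟩
  obtain hpt | hpt := Nat.eq_zero_or_pos (skewPt G S)
  · have hS : S = univ := by simpa [hpt, skewIter] using hS.skewIter_skewPt
    rw [hS, ncard_univ]
    omega
  · obtain hS | hS := Nat.eq_zero_or_pos S.ncard
    · rw [(ncard_eq_zero).1 hS] at hpt ⊢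
      simp [h]
    · omega

namespace SimpleGraph

def IsLeaf (G : SimpleGraph V) (v : V) : Prop := ∃! u, G.Adj v u

def HasUniquePendants (G : SimpleGraph V) : Prop :=
  ∀ v, ¬G.IsLeaf v → ∃! ℓ, G.IsLeaf ℓ ∧ G.Adj v ℓ

theorem IsLeaf.eq_of_adj {v u w : V} (h : G.IsLeaf v) (hu : G.Adj v u) (hw : G.Adj v w) :
    u = w :=
  h.unique hu hw

theorem Iso.isLeaf_iff (e : G ≃g H) {v : V} : H.IsLeaf (e v) ↔ G.IsLeaf v :=
  (e.toEquiv.existsUnique_congr fun _ => e.map_adj_iff.symm).symm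

theorem isLeaf_induce_iff {s : Set V} (hs : ∀ ⦃v w⦄, G.Adj v w → v ∈ s → w ∈ s) {v : s} :
    (G.induce s).IsLeaf v ↔ G.IsLeaf v :=
  existsUnique_subtype_iff fun _ h => hs h v.2

theorem isLeaf_sum_inl {v : V} : (G ⊕g H).IsLeaf (.inl v) ↔ G.IsLeaf v := by
  constructor
  · rintro ⟨u | u, hu, huniq⟩
    · exact ⟨u, hu, fun w hw => Sum.inl_injective (huniq (.inl w) hw)⟩
    · simp at hu
  · rintro ⟨u, hu, huniq⟩
    refine ⟨.inl u, hu, ?_⟩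
    rintro (w | w) hw
    · exact congrArg _ (huniq w hw)
    · simp at hw

theorem isLeaf_sum_inr {w : W} : (G ⊕g H).IsLeaf (.inr w) ↔ H.IsLeaf w :=
  (Iso.isLeaf_iff Iso.sumComm).trans isLeaf_sum_inl

theorem HasUniquePendants.sum (hG : G.HasUniquePendants) (hH : H.HasUniquePendants) :
    (G ⊕g H).HasUniquePendants := by
  rintro (v | w) hv
  · rw [isLeaf_sum_inl] at hv
    obtain ⟨ℓ, ⟨hℓ, hvℓ⟩, huniq⟩ := hG v hv
    refine ⟨.inl ℓ, ⟨isLeaf_sum_inl.2 hℓ, hvℓ⟩, ?_⟩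
    rintro (u | u) ⟨hu, hvu⟩
    · exact congrArg _ (huniq u ⟨isLeaf_sum_inl.1 hu, hvu⟩)
    · simp at hvu
  · rw [isLeaf_sum_inr] at hv
    obtain ⟨ℓ, ⟨hℓ, hvℓ⟩, huniq⟩ := hH w hv
    refine ⟨.inr ℓ, ⟨isLeaf_sum_inr.2 hℓ, hvℓ⟩, ?_⟩
    rintro (u | u) ⟨hu, hvu⟩
    · simp at hvu
    · exact congrArg _ (huniq u ⟨isLeaf_sum_inr.1 hu, hvu⟩)

theorem HasUniquePendants.exists_adj_not_isLeaf (hP : G.HasUniquePendants) {b : V}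
    (hb : ¬G.IsLeaf b) : ∃ u, G.Adj b u ∧ ¬G.IsLeaf u := by
  obtain ⟨ℓ, ⟨hℓ, hbℓ⟩, huniq⟩ := hP b hb
  obtain ⟨u, hbu, huℓ⟩ : ∃ u, G.Adj b u ∧ u ≠ ℓ := by
    by_contra! h
    exact hb ⟨ℓ, hbℓ, h⟩
  exact ⟨u, hbu, fun hu => huℓ (huniq u ⟨hu, hbu⟩)⟩

end SimpleGraph

theorem mem_skewStep_empty {x : V} : x ∈ skewStep G ∅ ↔ ∃ ℓ, G.IsLeaf ℓ ∧ G.Adj ℓ x := by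
  simp only [mem_skewStep, mem_empty_iff_false, not_false_eq_true, forall_const, false_or]
  exact exists_congr fun ℓ =>
    ⟨fun h => ⟨⟨x, h⟩, h.1⟩, fun h => ⟨h.2, fun u hu => h.1.eq_of_adj hu h.2⟩⟩

theorem notMem_skewStep_empty {ℓ u : V} (hℓ : G.IsLeaf ℓ) (hu : G.Adj ℓ u)
    (hu' : ¬G.IsLeaf u) : ℓ ∉ skewStep G ∅ := by
  rw [mem_skewStep_empty]
  rintro ⟨ℓ', hℓ', hℓ'ℓ⟩
  exact hu' (hℓ.eq_of_adj hℓ'ℓ.symm hu ▸ hℓ')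

section SecondRound

variable (h2 : skewStep G (skewStep G ∅) = univ)
include h2

theorem mem_skewStep_empty_of_adj_pendant {u ℓ w : V} (hℓ : G.IsLeaf ℓ) (huℓ : G.Adj u ℓ)
    (hu : ¬G.IsLeaf u) (huw : G.Adj u w) (hwℓ : w ≠ ℓ) : w ∈ skewStep G ∅ := by
  obtain hℓ1 | ⟨v, hvℓ, hv⟩ := mem_skewStep.1 (h2 ▸ mem_univ ℓ)
  · exact absurd hℓ1 (notMem_skewStep_empty hℓ huℓ.symm hu)
  obtain rfl : v = u := hℓ.eq_of_adj hvℓ.symm huℓ.symm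
  by_contra hw
  exact hwℓ (hv w huw hw)

theorem mem_skewStep_empty_of_not_isLeaf {b : V} (hb : ¬G.IsLeaf b) : b ∈ skewStep G ∅ := by
  have spread : ∀ u w, u ∈ skewStep G ∅ → ¬G.IsLeaf u → G.Adj u w → ¬G.IsLeaf w →
      w ∈ skewStep G ∅ := by
    intro u w hu hu' huw hw
    obtain ⟨ℓ, hℓ, hℓu⟩ := mem_skewStep_empty.1 hu
    exact mem_skewStep_empty_of_adj_pendant h2 hℓ hℓu.symm hu' huw fun h => hw (h ▸ hℓ)
  -- otherwise the vertex `v` forcing `b` is a white non-leaf whose other neighbours are blue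
  -- non-leaves, and `spread` turns `v` blue
  by_contra hb1
  obtain hb1' | ⟨v, hvb, hv⟩ := mem_skewStep.1 (h2 ▸ mem_univ b)
  · exact hb1 hb1'
  have hv' : ¬G.IsLeaf v := fun h => hb1 (mem_skewStep_empty.2 ⟨v, h, hvb⟩)
  have hv1 : v ∉ skewStep G ∅ := fun h => hb1 (spread v b h hv' hvb hb)
  obtain ⟨w, hvw, hwb⟩ : ∃ w, G.Adj v w ∧ w ≠ b := by
    by_contra! h
    exact hv' ⟨b, hvb, h⟩
  have hw1 : w ∈ skewStep G ∅ := by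
    by_contra hw1
    exact hwb (hv w hvw hw1)
  have hw' : ¬G.IsLeaf w := fun h => hv1 (mem_skewStep_empty.2 ⟨w, h, hvw.symm⟩)
  exact hv1 (spread w v hw1 hw' hvw.symm hv')

end SecondRound

theorem skewStep_skewStep_empty_eq_univ_iff :
    skewStep G (skewStep G ∅) = univ ↔ G.HasUniquePendants := by
  constructor
  · intro h2 b hb
    obtain ⟨ℓ, hℓ, hℓb⟩ := mem_skewStep_empty.1 (mem_skewStep_empty_of_not_isLeaf h2 hb)
    refine ⟨ℓ, ⟨hℓ, hℓb.symm⟩, fun ℓ' ⟨hℓ', hbℓ'⟩ => ?_⟩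
    by_contra hne
    exact notMem_skewStep_empty hℓ' hbℓ'.symm hb
      (mem_skewStep_empty_of_adj_pendant h2 hℓ hℓb.symm hb hbℓ' hne)
  · intro hP
    have hN : ∀ v, ¬G.IsLeaf v → v ∈ skewStep G ∅ := fun v hv =>
      have ⟨ℓ, ⟨hℓ, hvℓ⟩, _⟩ := hP v hv
      mem_skewStep_empty.2 ⟨ℓ, hℓ, hvℓ.symm⟩
    refine eq_univ_of_forall fun x => ?_
    by_cases hx : G.IsLeaf x
    · obtain ⟨u, hxu, -⟩ := id hx
      by_cases hu : G.IsLeaf u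
      · exact subset_union_left (mem_skewStep_empty.2 ⟨u, hu, hxu.symm⟩)
      refine mem_skewStep.2 (Or.inr ⟨u, hxu.symm, fun w huw hw1 => ?_⟩)
      have hw : G.IsLeaf w := by_contra fun h => hw1 (hN w h)
      exact (hP u hu).unique ⟨hw, huw⟩ ⟨hx, hxu.symm⟩
    · exact subset_union_left (hN x hx)

theorem skewPt_empty_eq_two_iff :
    skewPt G ∅ = 2 ↔ G.HasUniquePendants ∧ ∃ v, ¬G.IsLeaf v := by
  rw [skewPt_eq_succ_iff, ← skewStep_skewStep_empty_eq_univ_iff]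
  refine and_congr_right fun h2 => ?_
  rw [skewIter, skewIter, Ne, eq_univ_iff_forall]
  push Not
  constructor
  · rintro ⟨x, hx⟩
    by_cases hx' : G.IsLeaf x
    · obtain ⟨u, hxu, -⟩ := hx'
      exact ⟨u, fun hu => hx (mem_skewStep_empty.2 ⟨u, hu, hxu.symm⟩)⟩
    · exact ⟨x, hx'⟩
  · rintro ⟨b, hb⟩
    obtain ⟨ℓ, hℓ, hℓb⟩ := mem_skewStep_empty.1 (mem_skewStep_empty_of_not_isLeaf h2 hb)
    exact ⟨ℓ, notMem_skewStep_empty hℓ hℓb hb⟩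

namespace SimpleGraph

theorem disjUnion_eq_sum (G : SimpleGraph V) (H : SimpleGraph W) : disjUnion G H = G ⊕g H := by
  ext (a | a) (b | b) <;> grind [disjUnion, fromRel_adj, sum_adj, Adj.ne, G.adj_comm, H.adj_comm]

@[simp] theorem coronaK1_adj_inl_inl {a b : V} :
    (coronaK1 G).Adj (.inl a) (.inl b) ↔ G.Adj a b := by
  simpa [coronaK1, G.adj_comm] using Adj.ne

@[simp] theorem coronaK1_adj_inl_inr {a b : V} : (coronaK1 G).Adj (.inl a) (.inr b) ↔ a = b := by
  simp [coronaK1]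

@[simp] theorem coronaK1_adj_inr_inl {a b : V} : (coronaK1 G).Adj (.inr a) (.inl b) ↔ b = a := by
  simp [coronaK1]

@[simp] theorem coronaK1_adj_inr_inr {a b : V} : ¬(coronaK1 G).Adj (.inr a) (.inr b) := by
  simp [coronaK1]

theorem rK2_adj {r : ℕ} {p q : Fin r × Fin 2} : (rK2 r).Adj p q ↔ q = (p.1, p.2 + 1) := by
  obtain ⟨j, k⟩ := p
  obtain ⟨j', k'⟩ := q
  fin_cases k <;> fin_cases k' <;> simp [rK2, eq_comm]

theorem isLeaf_rK2 {r : ℕ} (p : Fin r × Fin 2) : (rK2 r).IsLeaf p := by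
  simp only [IsLeaf, rK2_adj, existsUnique_eq]

theorem isLeaf_coronaK1_inr {a : V} : (coronaK1 G).IsLeaf (.inr a) :=
  ⟨.inl a, by simp, by rintro (b | b) h <;> simp_all⟩

theorem not_isLeaf_coronaK1_inl {a b : V} (hab : G.Adj a b) : ¬(coronaK1 G).IsLeaf (.inl a) :=
  fun h => by simpa using h.eq_of_adj (coronaK1_adj_inl_inl.2 hab) (coronaK1_adj_inl_inr.2 rfl)

theorem hasUniquePendants_coronaK1 (hG : ∀ a, ∃ b, G.Adj a b) :
    (coronaK1 G).HasUniquePendants := by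
  rintro (a | a) ha
  · refine ⟨.inr a, ⟨isLeaf_coronaK1_inr, by simp⟩, ?_⟩
    rintro (b | b) ⟨hb, hab⟩
    · obtain ⟨c, hbc⟩ := hG b
      exact absurd hb (not_isLeaf_coronaK1_inl hbc)
    · simp_all
  · exact absurd isLeaf_coronaK1_inr ha

def Iso.coronaK1Congr (e : G ≃g H) : coronaK1 G ≃g coronaK1 H where
  toEquiv := e.toEquiv.sumCongr e.toEquiv
  map_rel_iff' {x y} := by cases x <;> cases y <;> simp [e.map_adj_iff, e.injective.eq_iff]

def isoSumInduceCompl (s : Set V) [DecidablePred (· ∈ s)]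
    (hs : ∀ ⦃v w⦄, G.Adj v w → v ∈ s → w ∈ s) : G.induce s ⊕g G.induce sᶜ ≃g G where
  toEquiv := Equiv.Set.sumCompl s
  map_rel_iff' {x y} := by
    rcases x with ⟨v, hv⟩ | ⟨v, hv⟩ <;> rcases y with ⟨w, hw⟩ | ⟨w, hw⟩ <;>
      simp only [Equiv.Set.sumCompl_apply_inl, Equiv.Set.sumCompl_apply_inr, sum_adj, induce_adj,
        iff_false]
    exacts [fun h => hw (hs h hv), fun h => hv (hs h.symm hw)]

theorem exists_rK2_iso [Finite V] (h : ∀ v, G.IsLeaf v) : ∃ r, Nonempty (rK2 r ≃g G) := by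
  choose σ hσ using fun v => (h v).exists
  have adj_iff : ∀ {v w}, G.Adj v w ↔ w = σ v :=
    ⟨fun hw => (h _).eq_of_adj hw (hσ _), fun hw => hw ▸ hσ _⟩
  have σσ : ∀ v, σ (σ v) = v := fun v => (adj_iff.1 (hσ v).symm).symm
  -- orient each edge `{v, σ v}` from its smaller end, in an arbitrary linear order on `V`
  let ι := Finite.equivFin V
  let R := {v // ι v < ι (σ v)}
  let e := Finite.equivFin R
  let g : Fin (Nat.card R) × Fin 2 → V := fun p => if p.2 = 0 then e.symm p.1 else σ (e.symm p.1)
  have g0 : ∀ j, g (j, 0) = e.symm j := fun j => if_pos rfl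
  have g1 : ∀ j, g (j, 1) = σ (e.symm j) := fun j => if_neg one_ne_zero
  have fin2 : ∀ k : Fin 2, k = 0 ∨ k = 1 := by decide
  have g_succ : ∀ p, σ (g p) = g (p.1, p.2 + 1) := by
    rintro ⟨j, k⟩
    obtain rfl | rfl := fin2 k
    · rw [g0]
      exact (g1 j).symm
    · rw [g1, σσ]
      exact (g0 j).symm
  have hinj : g.Injective := by
    rintro ⟨j, k⟩ ⟨j', k'⟩ hjk
    have h₁ := (e.symm j).2
    have h₂ := (e.symm j').2
    obtain rfl | rfl := fin2 k <;> obtain rfl | rfl := fin2 k'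
    · rw [g0, g0] at hjk
      rw [e.symm.injective (Subtype.ext hjk)]
    · rw [g0, g1] at hjk
      rw [hjk, σσ] at h₁
      exact absurd h₁ h₂.not_gt
    · rw [g1, g0] at hjk
      rw [← hjk, σσ] at h₂
      exact absurd h₁ h₂.not_gt
    · rw [g1, g1] at hjk
      have := congrArg σ hjk
      rw [σσ, σσ] at this
      rw [e.symm.injective (Subtype.ext this)]
  have hsurj : g.Surjective := by
    intro v
    obtain hv | hv := lt_or_gt_of_ne (ι.injective.ne (hσ v).ne)
    · exact ⟨(e ⟨v, hv⟩, 0), by rw [g0, e.symm_apply_apply]⟩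
    · exact ⟨(e ⟨σ v, by rwa [σσ]⟩, 1), by rw [g1, e.symm_apply_apply, σσ]⟩
  refine ⟨Nat.card R, ⟨Equiv.ofBijective g ⟨hinj, hsurj⟩, ?_⟩⟩
  rintro ⟨j, k⟩ ⟨j', k'⟩
  change G.Adj (g (j, k)) (g (j', k')) ↔ _
  rw [adj_iff, g_succ, hinj.eq_iff, rK2_adj]

theorem nonempty_coronaK1_induce_iso (hP : G.HasUniquePendants)
    (hL : ∀ ℓ v, G.IsLeaf ℓ → G.Adj ℓ v → ¬G.IsLeaf v) :
    Nonempty (coronaK1 (G.induce {v | ¬G.IsLeaf v}) ≃g G) := by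
  choose pend hpend using fun v hv => (hP v hv).exists
  let g : {v | ¬G.IsLeaf v} ⊕ {v | ¬G.IsLeaf v} → V := Sum.elim Subtype.val fun v => pend v v.2
  have adj_pend : ∀ {a : V} (b : {v | ¬G.IsLeaf v}), G.Adj a (pend b b.2) ↔ a = b :=
    fun b => ⟨fun h => (hpend b b.2).1.eq_of_adj h.symm (hpend b b.2).2.symm,
      fun h => h ▸ (hpend b b.2).2⟩
  have hinj : g.Injective := by
    rintro (a | a) (b | b) hab <;> simp only [g, Sum.elim_inl, Sum.elim_inr] at hab
    · exact congrArg _ (Subtype.ext hab)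
    · exact absurd (hab ▸ (hpend b b.2).1) a.2
    · exact absurd (hab ▸ (hpend a a.2).1) b.2
    · exact congrArg _ (Subtype.ext ((adj_pend b).1 (hab ▸ (hpend a a.2).2)))
  have hsurj : g.Surjective := by
    intro v
    by_cases hv : G.IsLeaf v
    · obtain ⟨u, hvu, -⟩ := id hv
      have hu : ¬G.IsLeaf u := hL v u hv hvu
      exact ⟨.inr ⟨u, hu⟩, ((hP u hu).unique (hpend u hu) ⟨hv, hvu.symm⟩)⟩
    · exact ⟨.inl ⟨v, hv⟩, rfl⟩
  refine ⟨⟨Equiv.ofBijective g ⟨hinj, hsurj⟩, ?_⟩⟩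
  rintro (a | a) (b | b)
  · simp [g]
  · simp [g, adj_pend, Subtype.ext_iff]
  · simp [g, G.adj_comm, adj_pend, Subtype.ext_iff]
  · simpa [g] using fun h => hL _ _ (hpend a a.2).1 h (hpend b b.2).1

theorem exists_coronaK1_iso [Finite V] (hP : G.HasUniquePendants)
    (hL : ∀ ℓ v, G.IsLeaf ℓ → G.Adj ℓ v → ¬G.IsLeaf v) (hN : ∃ v, ¬G.IsLeaf v) :
    ∃ (m : ℕ) (Ghat : SimpleGraph (Fin m)), 2 ≤ m ∧ (∀ v, ∃ u, Ghat.Adj v u) ∧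
      Nonempty (coronaK1 Ghat ≃g G) := by
  let N := {v | ¬G.IsLeaf v}
  let φ := Iso.map (Finite.equivFin N) (G.induce N)
  obtain ⟨ψ⟩ := nonempty_coronaK1_induce_iso hP hL
  refine ⟨Nat.card N, _, ?_, fun i => ?_, ⟨φ.symm.coronaK1Congr.trans ψ⟩⟩
  · obtain ⟨b, hb⟩ := hN
    obtain ⟨u, hbu, hu⟩ := hP.exists_adj_not_isLeaf hb
    have : Nontrivial N := ⟨⟨b, hb⟩, ⟨u, hu⟩, fun h => hbu.ne (congrArg Subtype.val h)⟩
    exact Finite.one_lt_card_iff_nontrivial.2 this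
  · obtain ⟨u, hbu, hu⟩ := hP.exists_adj_not_isLeaf (φ.symm i).2
    refine ⟨φ ⟨u, hu⟩, ?_⟩
    rw [← φ.apply_symm_apply i]
    exact φ.map_adj_iff.2 hbu

theorem exists_disjUnion_coronaK1_rK2_iso [Finite V] (hP : G.HasUniquePendants)
    (hN : ∃ v, ¬G.IsLeaf v) :
    ∃ (m r : ℕ) (Ghat : SimpleGraph (Fin m)), 2 ≤ m ∧ (∀ v, ∃ u, Ghat.Adj v u) ∧
      Nonempty (disjUnion (coronaK1 Ghat) (rK2 r) ≃g G) := by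
  classical
  let K := {v | G.IsLeaf v ∧ ∃ w, G.Adj v w ∧ G.IsLeaf w}
  have hK : ∀ ⦃v w⦄, G.Adj v w → v ∈ K → w ∈ K := by
    rintro v w hvw ⟨hv, w', hvw', hw'⟩
    obtain rfl := hv.eq_of_adj hvw hvw'
    exact ⟨hw', v, hvw.symm, hv⟩
  have hKc : ∀ ⦃v w⦄, G.Adj v w → v ∈ Kᶜ → w ∈ Kᶜ := fun v w hvw hv hw => hv (hK hvw.symm hw)
  obtain ⟨r, ⟨ε⟩⟩ := exists_rK2_iso (G := G.induce K) fun v => (isLeaf_induce_iff hK).2 v.2.1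
  have hP' : (G.induce Kᶜ).HasUniquePendants := by
    intro v hv
    rw [isLeaf_induce_iff hKc] at hv
    simp only [isLeaf_induce_iff hKc, induce_adj]
    exact (existsUnique_subtype_iff fun ℓ hℓ => hKc hℓ.2 v.2).2 (hP v hv)
  have hL' : ∀ ℓ v, (G.induce Kᶜ).IsLeaf ℓ → (G.induce Kᶜ).Adj ℓ v →
      ¬(G.induce Kᶜ).IsLeaf v := by
    intro ℓ v hℓ hℓv hv
    rw [isLeaf_induce_iff hKc] at hℓ hv
    exact ℓ.2 ⟨hℓ, v, hℓv, hv⟩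
  have hN' : ∃ v, ¬(G.induce Kᶜ).IsLeaf v := by
    obtain ⟨b, hb⟩ := hN
    exact ⟨⟨b, fun h => hb h.1⟩, by rwa [isLeaf_induce_iff hKc]⟩
  obtain ⟨m, Ghat, hm, hdeg, ⟨ψ⟩⟩ := exists_coronaK1_iso hP' hL' hN'
  refine ⟨m, r, Ghat, hm, hdeg, ⟨?_⟩⟩
  rw [disjUnion_eq_sum]
  exact (ψ.sumCongr ε).trans (Iso.sumComm.trans (isoSumInduceCompl K hK))

end SimpleGraph

end

/-- `th₋(G) = th₋(G,0) = 2` iff `G ≅ (Ĝ ∘ K₁) ⊔ rK₂` where `Ĝ` has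
order at least two and every component of `Ĝ` has an edge. -/
theorem skewTh_eq_two_of_empty_set_iff {V : Type*} [Fintype V] (G : SimpleGraph V) :
    (skewTh G = 2 ∧ skewThK G 0 = 2) ↔
      ∃ (m r : ℕ) (Ghat : SimpleGraph (Fin m)),
        2 ≤ m ∧ (∀ v, ∃ u, Ghat.Adj v u) ∧
        Nonempty (G ≃g disjUnion (coronaK1 Ghat) (rK2 r)) := by
  rw [skewThK_zero]
  constructor
  · rintro ⟨-, h⟩
    obtain ⟨hP, hN⟩ := skewPt_empty_eq_two_iff.1 h
    obtain ⟨m, r, Ghat, hm, hdeg, ⟨e⟩⟩ := exists_disjUnion_coronaK1_rK2_iso hP hN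
    exact ⟨m, r, Ghat, hm, hdeg, ⟨e.symm⟩⟩
  · rintro ⟨m, r, Ghat, hm, hdeg, ⟨e⟩⟩
    rw [disjUnion_eq_sum] at e
    have hpt : skewPt G ∅ = 2 := by
      rw [← preimage_empty, e.skewPt_preimage, skewPt_empty_eq_two_iff]
      obtain ⟨b, hb⟩ := hdeg ⟨0, by omega⟩
      exact ⟨(hasUniquePendants_coronaK1 hdeg).sum fun p hp => absurd (isLeaf_rK2 p) hp,
        .inl (.inl _), isLeaf_sum_inl.not.2 (not_isLeaf_coronaK1_inl hb)⟩
    have hV : 2 ≤ Nat.card V := by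
      rw [Nat.card_congr e.toEquiv, Nat.card_eq_fintype_card]
      simp only [Fintype.card_sum, Fintype.card_prod, Fintype.card_fin]
      omega
    exact ⟨skewTh_eq_two hV hpt, hpt⟩
end

section
/- For a simple graph G of order n, th_-(G) = n − 1 if and only if G is a cograph (i.e., G has no induced subgraph isomorphic to the path P_4) that has no induced subgraph isomorphic to 2K_2 and has at least one edge. -/
open SimpleGraph

/-!
Let `n = |V|`. If `G` has an induced copy `H` of `P₄`, `2K₂` or `K₂`, colour everything outside
`H` blue: the copy is then forced in `2`, `1`, `1` rounds respectively, so `th₋(G)` is at most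
`n - 2`, `n - 3`, `n - 1`; an edgeless graph has `th₋ = n`.

Conversely, in a `{P₄, 2K₂}`-free graph two vertices forced in the same round are adjacent
(otherwise the two forcing edges span an induced `P₄` or `2K₂`). Hence no round colours three
vertices and at most one round colours two, so `|S| + pt₋(G; S) ≥ n - 1` for every skew zero
forcing set `S`.
-/

lemma Finset.sum_range_le_add_one {F : ℕ → ℕ} (hF : ∀ i, F i ≤ 2)
    (h : {i | 2 ≤ F i}.Subsingleton) (p : ℕ) : ∑ i ∈ range p, F i ≤ p + 1 := by
  have hle (i : ℕ) : F i ≤ 1 + if 2 ≤ F i then 1 else 0 := by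
    have := hF i
    split_ifs <;> omega
  have hcard : ((range p).filter (2 ≤ F ·)).card ≤ 1 :=
    Finset.card_le_one.mpr fun i hi j hj => h (mem_filter.mp hi).2 (mem_filter.mp hj).2
  calc ∑ i ∈ range p, F i ≤ ∑ i ∈ range p, (1 + if 2 ≤ F i then 1 else 0) :=
        sum_le_sum fun i _ => hle i
    _ = p + ((range p).filter (2 ≤ F ·)).card := by simp [sum_add_distrib, sum_boole]
    _ ≤ p + 1 := by omega

namespace SimpleGraph

variable {V W : Type*} {G : SimpleGraph V} {H : SimpleGraph W}

lemma subset_skewStep (G : SimpleGraph V) (B : Set V) : B ⊆ skewStep G B :=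
  Set.subset_union_left

lemma skewStep_mono {B C : Set V} (h : B ⊆ C) : skewStep G B ⊆ skewStep G C := by
  rintro w (hw | ⟨v, hvw, hv⟩)
  · exact Or.inl (h hw)
  · exact Or.inr ⟨v, hvw, fun u hvu huC => hv u hvu (fun huB => huC (h huB))⟩

lemma skewIter_mono (G : SimpleGraph V) (S : Set V) : Monotone (skewIter G S) :=
  monotone_nat_of_le_succ fun _ => subset_skewStep G _

lemma skewStep_bot (B : Set V) : skewStep (⊥ : SimpleGraph V) B = B :=
  Set.union_eq_left.mpr fun _ ⟨_, hvw, _⟩ => hvw.elim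

lemma skewIter_bot (S : Set V) (n : ℕ) : skewIter (⊥ : SimpleGraph V) S n = S := by
  induction n with
  | zero => rfl
  | succ n ih => rw [skewIter, ih, skewStep_bot]

lemma skewTh_le {S : Set V} {k : ℕ} (h : skewIter G S k = Set.univ) :
    skewTh G ≤ S.ncard + k :=
  calc skewTh G ≤ S.ncard + skewPt G S := Nat.sInf_le ⟨S, ⟨k, h⟩, rfl⟩
    _ ≤ S.ncard + k := Nat.add_le_add_left (Nat.sInf_le h) _

lemma exists_skewTh_eq (G : SimpleGraph V) :
    ∃ S, IsSkewZFS G S ∧ skewTh G = S.ncard + skewPt G S :=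
  Nat.sInf_mem (s := {m | ∃ S, IsSkewZFS G S ∧ m = S.ncard + skewPt G S})
    ⟨_, Set.univ, ⟨0, rfl⟩, rfl⟩

lemma skewTh_bot [Fintype V] : skewTh (⊥ : SimpleGraph V) = Fintype.card V := by
  obtain ⟨S, ⟨n, hn⟩, hS⟩ := exists_skewTh_eq (⊥ : SimpleGraph V)
  rw [skewIter_bot] at hn
  subst hn
  rw [← Nat.card_eq_fintype_card, ← Set.ncard_univ]
  exact le_antisymm (skewTh_le (skewIter_bot _ 0)) (hS ▸ Nat.le_add_right _ _)

lemma compl_range_union_image_skewStep_subset (f : H ↪g G) (B : Set W) :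
    (Set.range f)ᶜ ∪ f '' skewStep H B ⊆ skewStep G ((Set.range f)ᶜ ∪ f '' B) := by
  rintro _ (hx | ⟨w, hw | ⟨v, hvw, hv⟩, rfl⟩)
  · exact Or.inl (Or.inl hx)
  · exact Or.inl (Or.inr ⟨w, hw, rfl⟩)
  refine Or.inr ⟨f v, f.map_adj_iff.mpr hvw, fun y hy hyB => ?_⟩
  obtain ⟨u, rfl⟩ : y ∈ Set.range f := not_not.mp fun h => hyB (Or.inl h)
  exact congrArg f (hv u (f.map_adj_iff.mp hy) fun hu => hyB (Or.inr ⟨u, hu, rfl⟩))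

lemma compl_range_union_image_skewIter_subset (f : H ↪g G) (S : Set W) (k : ℕ) :
    (Set.range f)ᶜ ∪ f '' skewIter H S k ⊆ skewIter G ((Set.range f)ᶜ ∪ f '' S) k := by
  induction k with
  | zero => exact subset_rfl
  | succ k ih => exact (compl_range_union_image_skewStep_subset f _).trans (skewStep_mono ih)

lemma skewTh_add_card_le [Fintype V] [Fintype W] (f : H ↪g G) {k : ℕ}
    (hk : skewIter H ∅ k = Set.univ) : skewTh G + Fintype.card W ≤ Fintype.card V + k := by
  have hG : skewIter G (Set.range f)ᶜ k = Set.univ := by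
    simpa [hk] using compl_range_union_image_skewIter_subset f ∅ k
  have hcard := Set.ncard_add_ncard_compl (Set.range f)
  rw [Set.ncard_range_of_injective f.injective, Nat.card_eq_fintype_card,
    Nat.card_eq_fintype_card] at hcard
  have := skewTh_le hG
  omega

lemma skewIter_completeGraph_fin_two : skewIter (completeGraph (Fin 2)) ∅ 1 = Set.univ := by
  refine Set.eq_univ_of_forall fun w => Or.inr ⟨w + 1, by simp, fun u hu _ => ?_⟩
  fin_cases w <;> fin_cases u <;> simp_all

lemma skewIter_pathGraph_four : skewIter (pathGraph 4) ∅ 2 = Set.univ := by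
  have h1 : {1, 2} ⊆ skewIter (pathGraph 4) ∅ 1 := by
    rintro w (rfl | rfl)
    · exact Or.inr ⟨0, by simp [pathGraph_adj], fun u hu _ => by
        fin_cases u <;> simp_all [pathGraph_adj]⟩
    · exact Or.inr ⟨3, by simp [pathGraph_adj], fun u hu _ => by
        fin_cases u <;> simp_all [pathGraph_adj]⟩
  have forced_by {v w : Fin 4} (hvw : (pathGraph 4).Adj v w)
      (hv : ∀ u, (pathGraph 4).Adj v u → u = w ∨ u ∈ ({1, 2} : Set (Fin 4))) :
      w ∈ skewIter (pathGraph 4) ∅ 2 :=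
    Or.inr ⟨v, hvw, fun u hvu huB => (hv u hvu).resolve_right fun hu => huB (h1 hu)⟩
  refine Set.eq_univ_of_forall fun w => ?_
  fin_cases w
  · exact forced_by (v := 1) (by simp [pathGraph_adj]) fun u hu => by
      fin_cases u <;> simp_all [pathGraph_adj]
  · exact Or.inl (h1 (by simp))
  · exact Or.inl (h1 (by simp))
  · exact forced_by (v := 2) (by simp [pathGraph_adj]) fun u hu => by
      fin_cases u <;> simp_all [pathGraph_adj]

lemma skewIter_rK2 (r : ℕ) : skewIter (rK2 r) ∅ 1 = Set.univ := by
  refine Set.eq_univ_of_forall fun ⟨i, j⟩ => Or.inr ⟨(i, j + 1), ?_, fun ⟨i', j'⟩ hu _ => ?_⟩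
  · fin_cases j <;> simp [rK2]
  · simp only [rK2, fromRel_adj, ne_eq, Prod.mk.injEq] at hu ⊢
    fin_cases j <;> fin_cases j' <;> grind

lemma nonempty_rK2_two_embedding {a b c d : V} (hab : G.Adj a b) (hcd : G.Adj c d)
    (hac : ¬G.Adj a c) (had : ¬G.Adj a d) (hbc : ¬G.Adj b c) (hbd : ¬G.Adj b d) :
    Nonempty (rK2 2 ↪g G) := by
  have hca : ¬G.Adj c a := fun h => hac h.symm
  have hda : ¬G.Adj d a := fun h => had h.symm
  have hcb : ¬G.Adj c b := fun h => hbc h.symm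
  have hdb : ¬G.Adj d b := fun h => hbd h.symm
  have nac : a ≠ c := by rintro rfl; exact had hcd
  have nad : a ≠ d := by rintro rfl; exact hac hcd.symm
  have nbc : b ≠ c := by rintro rfl; exact hbd hcd
  have nbd : b ≠ d := by rintro rfl; exact hbc hcd.symm
  let f : Fin 2 × Fin 2 → V := fun p => ![![a, b], ![c, d]] p.1 p.2
  have hf : Function.Injective f := by
    rintro ⟨x₁, x₂⟩ ⟨y₁, y₂⟩ hxy
    fin_cases x₁ <;> fin_cases x₂ <;> fin_cases y₁ <;> fin_cases y₂ <;>
      simp_all [f, hab.ne, hcd.ne, hab.ne', hcd.ne', nac.symm, nad.symm, nbc.symm, nbd.symm]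
  refine ⟨⟨⟨f, hf⟩, fun {x y} => ?_⟩⟩
  obtain ⟨x₁, x₂⟩ := x
  obtain ⟨y₁, y₂⟩ := y
  fin_cases x₁ <;> fin_cases x₂ <;> fin_cases y₁ <;> fin_cases y₂ <;>
    simp [f, rK2, hab, hcd, hab.symm, hcd.symm, hac, had, hbc, hbd, hca, hda, hcb, hdb]

lemma nonempty_pathGraph_four_embedding {a b c d : V} (hab : G.Adj a b) (hbc : G.Adj b c)
    (hcd : G.Adj c d) (hac : ¬G.Adj a c) (had : ¬G.Adj a d) (hbd : ¬G.Adj b d) :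
    Nonempty (pathGraph 4 ↪g G) := by
  have hca : ¬G.Adj c a := fun h => hac h.symm
  have hda : ¬G.Adj d a := fun h => had h.symm
  have hdb : ¬G.Adj d b := fun h => hbd h.symm
  have nac : a ≠ c := by rintro rfl; exact had hcd
  have nad : a ≠ d := by rintro rfl; exact hbd hab.symm
  have nbd : b ≠ d := by rintro rfl; exact had hab
  let f : Fin 4 → V := ![a, b, c, d]
  have hf : Function.Injective f := by
    intro x y hxy
    fin_cases x <;> fin_cases y <;>
      simp_all [f, hab.ne, hbc.ne, hcd.ne, hab.ne', hbc.ne', hcd.ne', nac.symm, nad.symm, nbd.symm]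
  refine ⟨⟨⟨f, hf⟩, fun {x y} => ?_⟩⟩
  fin_cases x <;> fin_cases y <;> simp [f, pathGraph_adj, hab, hbc, hcd, hab.symm, hbc.symm,
    hcd.symm, hac, had, hbd, hca, hda, hdb]

structure SkewForces (G : SimpleGraph V) (B : Set V) (v w : V) : Prop where
  adj : G.Adj v w
  notMem : w ∉ B
  eq_of_adj : ∀ u, G.Adj v u → u ∉ B → u = w

lemma exists_skewForces_of_mem_diff {B : Set V} {w : V} (hw : w ∈ skewStep G B \ B) :
    ∃ v, SkewForces G B v w := by
  obtain ⟨hw | ⟨v, hvw, hv⟩, hwB⟩ := hw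
  · exact absurd hw hwB
  · exact ⟨v, hvw, hwB, hv⟩

lemma SkewForces.mem_skewStep {B : Set V} {v w : V} (h : SkewForces G B v w) :
    w ∈ skewStep G B :=
  Or.inr ⟨v, h.adj, h.eq_of_adj⟩

lemma SkewForces.not_adj {B : Set V} {v w u : V} (h : SkewForces G B v w) (hu : u ∉ B)
    (hne : u ≠ w) : ¬G.Adj v u :=
  fun hvu => hne (h.eq_of_adj u hvu hu)

lemma SkewForces.adj_of_ne {B : Set V} {v₁ v₂ w₁ w₂ : V} (hP4 : ¬Nonempty (pathGraph 4 ↪g G))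
    (hK : ¬Nonempty (rK2 2 ↪g G))
    (h₁ : SkewForces G B v₁ w₁) (h₂ : SkewForces G B v₂ w₂) (hne : w₁ ≠ w₂) : G.Adj w₁ w₂ := by
  have n₁ := h₁.not_adj h₂.notMem hne.symm
  have n₂ := h₂.not_adj h₁.notMem hne
  by_contra hw
  by_cases hv : G.Adj v₁ v₂
  · exact hP4 (nonempty_pathGraph_four_embedding h₁.adj.symm hv h₂.adj (fun h => n₂ h.symm) hw n₁)
  · exact hK (nonempty_rK2_two_embedding h₁.adj h₂.adj hv n₁ (fun h => n₂ h.symm) hw)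

lemma ncard_skewStep_diff_le_two [Finite V] (hP4 : ¬Nonempty (pathGraph 4 ↪g G))
    (hK : ¬Nonempty (rK2 2 ↪g G)) (B : Set V) : (skewStep G B \ B).ncard ≤ 2 := by
  by_contra h
  obtain ⟨w₁, w₂, w₃, hw₁, hw₂, hw₃, n₁₂, n₁₃, n₂₃⟩ := (Set.two_lt_ncard_iff).mp (not_le.mp h)
  obtain ⟨v₁, h₁⟩ := exists_skewForces_of_mem_diff hw₁
  obtain ⟨v₂, h₂⟩ := exists_skewForces_of_mem_diff hw₂
  obtain ⟨v₃, h₃⟩ := exists_skewForces_of_mem_diff hw₃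
  have a₁₂ := h₁.adj_of_ne hP4 hK h₂ n₁₂
  have a₂₃ := h₂.adj_of_ne hP4 hK h₃ n₂₃
  by_cases hv : G.Adj v₂ v₃
  · exact hP4 (nonempty_pathGraph_four_embedding a₁₂ h₂.adj.symm hv
      (fun h => h₂.not_adj h₁.notMem n₁₂ h.symm) (fun h => h₃.not_adj h₁.notMem n₁₃ h.symm)
      (fun h => h₃.not_adj h₂.notMem n₂₃ h.symm))
  · exact hP4 (nonempty_pathGraph_four_embedding h₂.adj a₂₃ h₃.adj.symm
      (h₂.not_adj h₃.notMem n₂₃.symm) hv (fun h => h₃.not_adj h₂.notMem n₂₃ h.symm))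

lemma ncard_skewStep_diff_le_one [Finite V] (hP4 : ¬Nonempty (pathGraph 4 ↪g G))
    (hK : ¬Nonempty (rK2 2 ↪g G)) {B B' : Set V} (hB : skewStep G B ⊆ B')
    (h₂ : 2 ≤ (skewStep G B \ B).ncard) : (skewStep G B' \ B').ncard ≤ 1 := by
  refine (Set.ncard_le_one_iff).mpr fun {w₁' w₂'} hw₁' hw₂' => by_contra fun n' => ?_
  obtain ⟨w₁, w₂, hw₁, hw₂, n⟩ := (Set.one_lt_ncard_iff).mp h₂
  obtain ⟨v₁, h₁⟩ := exists_skewForces_of_mem_diff hw₁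
  obtain ⟨v₂, h₂⟩ := exists_skewForces_of_mem_diff hw₂
  obtain ⟨v₁', h₁'⟩ := exists_skewForces_of_mem_diff hw₁'
  obtain ⟨v₂', h₂'⟩ := exists_skewForces_of_mem_diff hw₂'
  have hBB' : B ⊆ B' := (subset_skewStep G B).trans hB
  have nb {v w w' : V} (h : SkewForces G B v w) (hw' : w' ∉ B') : ¬G.Adj v w' :=
    h.not_adj (fun h => hw' (hBB' h)) fun h' => hw' (h' ▸ hB h.mem_skewStep)
  have hA := h₁'.adj_of_ne hP4 hK h₂' n'
  by_cases hv : G.Adj v₁ v₂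
  · exact hK (nonempty_rK2_two_embedding hv hA (nb h₁ hw₁'.2) (nb h₁ hw₂'.2) (nb h₂ hw₁'.2)
      (nb h₂ hw₂'.2))
  · exact hP4 (nonempty_pathGraph_four_embedding h₁.adj (h₁.adj_of_ne hP4 hK h₂ n) h₂.adj.symm
      (h₁.not_adj h₂.notMem n.symm) hv (fun h => h₂.not_adj h₁.notMem n h.symm))

lemma ncard_skewIter [Finite V] (G : SimpleGraph V) (S : Set V) (k : ℕ) :
    (skewIter G S k).ncard =
      S.ncard + ∑ i ∈ Finset.range k, (skewIter G S (i + 1) \ skewIter G S i).ncard := by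
  induction k with
  | zero => simp [skewIter]
  | succ k ih =>
    have := Set.ncard_sdiff_add_ncard_of_subset (skewIter_mono G S (Nat.le_add_right k 1))
    rw [Finset.sum_range_succ, ← add_assoc, ← ih]
    omega

theorem card_le_ncard_add_skewPt [Fintype V] (hP4 : ¬Nonempty (pathGraph 4 ↪g G))
    (hK : ¬Nonempty (rK2 2 ↪g G)) {S : Set V} (hS : IsSkewZFS G S) :
    Fintype.card V ≤ S.ncard + skewPt G S + 1 := by
  set F : ℕ → ℕ := fun i => (skewIter G S (i + 1) \ skewIter G S i).ncard
  have hF : {i | 2 ≤ F i}.Subsingleton := by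
    intro i hi j hj
    by_contra hne
    wlog hij : i < j generalizing i j
    · exact this hj hi (Ne.symm hne) (by omega)
    have : F j ≤ 1 := ncard_skewStep_diff_le_one hP4 hK (skewIter_mono G S hij) hi
    exact absurd (show 2 ≤ F j from hj) (by omega)
  have hsum : ∑ i ∈ Finset.range (skewPt G S), F i ≤ skewPt G S + 1 :=
    Finset.sum_range_le_add_one (fun _ => ncard_skewStep_diff_le_two hP4 hK _) hF _
  have hcard : (skewIter G S (skewPt G S)).ncard =
      S.ncard + ∑ i ∈ Finset.range (skewPt G S), F i :=
    ncard_skewIter G S (skewPt G S)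
  rw [show skewIter G S (skewPt G S) = Set.univ from Nat.sInf_mem hS, Set.ncard_univ,
    Nat.card_eq_fintype_card] at hcard
  omega

end SimpleGraph

/-- `th₋(G) = n - 1` iff `G` is a cograph (no induced `P₄`) with no
induced `2K₂` and at least one edge. -/
theorem skewTh_eq_card_sub_one_iff {V : Type*} [Fintype V] (G : SimpleGraph V) :
    (skewTh G : ℤ) = (Fintype.card V : ℤ) - 1 ↔
      (¬ Nonempty (SimpleGraph.pathGraph 4 ↪g G) ∧
        ¬ Nonempty (rK2 2 ↪g G) ∧ ∃ u v, G.Adj u v) := by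
  have hbot : G ≠ ⊥ ↔ ∃ u v, G.Adj u v := by simp [eq_bot_iff_forall_not_adj]
  constructor
  · intro h
    refine ⟨fun ⟨f⟩ => ?_, fun ⟨f⟩ => ?_, hbot.mp fun hG => ?_⟩
    · have := skewTh_add_card_le f skewIter_pathGraph_four
      simp only [Fintype.card_fin] at this
      omega
    · have := skewTh_add_card_le f (skewIter_rK2 2)
      simp only [Fintype.card_prod, Fintype.card_fin] at this
      omega
    · rw [hG, skewTh_bot] at h
      omega
  · rintro ⟨hP4, hK, hG⟩
    have hedge : ¬G.CliqueFree 2 := fun h => hbot.mpr hG (cliqueFree_two.mp h)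
    have hup := skewTh_add_card_le (topEmbeddingOfNotCliqueFree hedge)
      skewIter_completeGraph_fin_two
    obtain ⟨S, hS, hth⟩ := exists_skewTh_eq G
    have hlow := card_le_ncard_add_skewPt hP4 hK hS
    simp only [Fintype.card_fin] at hup
    omega
end

section
/- For integers s ≥ 2 and n_1, …, n_s ≥ 1 with n = n_1 + n_2 + ⋯ + n_s, the complete multipartite graph K_{n_1, n_2, …, n_s} satisfies th_-(K_{n_1, n_2, …, n_s}) = n − 1. -/
open SimpleGraph

/-!
A *skew fort* is a set `F` of vertices no vertex of which has exactly one neighbour in `F`; a fort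
that is entirely white stays white forever. In `K_{n₁,…,nₛ}` any three vertices contain a fort
(two of them in one part, or three in pairwise distinct parts), so a skew zero forcing set misses
at most two vertices, and it needs at least one round unless it is everything: `th₋ ≥ n - 1`.
Conversely, whitening the two ends of any edge leaves each end with the other as its only white
neighbour, so one round finishes: `th₋ ≤ (n - 2) + 1`.
-/

section SkewForcing

variable {V : Type*} {G : SimpleGraph V} {S B F : Set V}

def IsSkewFort (G : SimpleGraph V) (F : Set V) : Prop :=
  ∀ v, ∀ w ∈ F, G.Adj v w → ∃ u ∈ F, u ≠ w ∧ G.Adj v u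

theorem IsSkewFort.disjoint_skewStep (hF : IsSkewFort G F) (hB : Disjoint F B) :
    Disjoint F (skewStep G B) := by
  refine Set.disjoint_left.2 fun w hwF hw => ?_
  rcases hw with hwB | ⟨v, hvw, hforce⟩
  · exact Set.disjoint_left.1 hB hwF hwB
  · obtain ⟨u, huF, huw, hvu⟩ := hF v w hwF hvw
    exact huw (hforce u hvu (Set.disjoint_left.1 hB huF))

theorem IsSkewFort.disjoint_skewIter (hF : IsSkewFort G F) (hS : Disjoint F S) (k : ℕ) :
    Disjoint F (skewIter G S k) := by
  induction k with
  | zero => exact hS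
  | succ k ih => exact hF.disjoint_skewStep ih

theorem IsSkewFort.not_isSkewZFS (hF : IsSkewFort G F) (hne : F.Nonempty) (hS : Disjoint F S) :
    ¬ IsSkewZFS G S := by
  rintro ⟨k, hk⟩
  have := hF.disjoint_skewIter hS k
  rw [hk, Set.disjoint_univ] at this
  exact hne.ne_empty this

theorem isSkewZFS_univ (G : SimpleGraph V) : IsSkewZFS G Set.univ := ⟨0, rfl⟩

theorem skewPt_le {k : ℕ} (h : skewIter G S k = Set.univ) : skewPt G S ≤ k := Nat.sInf_le h

theorem skewPt_pos (hS : IsSkewZFS G S) (hne : S ≠ Set.univ) : 0 < skewPt G S := by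
  refine Nat.pos_of_ne_zero fun h0 => hne ?_
  have : skewIter G S (skewPt G S) = Set.univ := Nat.sInf_mem hS
  rwa [h0] at this

theorem skewStep_compl_pair_of_adj {a b : V} (hab : G.Adj a b) :
    skewStep G {a, b}ᶜ = Set.univ := by
  refine Set.eq_univ_of_forall fun w => ?_
  by_cases hw : w ∈ ({a, b} : Set V)ᶜ
  · exact Or.inl hw
  have white : ∀ u, u ∉ ({a, b} : Set V)ᶜ ↔ u = a ∨ u = b := fun _ => Set.notMem_compl_iff
  rcases (white w).1 hw with rfl | rfl
  · exact Or.inr ⟨b, hab.symm, fun u hbu hu => ((white u).1 hu).resolve_right hbu.ne.symm⟩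
  · exact Or.inr ⟨a, hab, fun u hau hu => ((white u).1 hu).resolve_left hau.ne.symm⟩

theorem skewTh_le_card_sub_one [Finite V] {a b : V} (hab : G.Adj a b) :
    skewTh G ≤ Nat.card V - 1 := by
  have hstep : skewIter G {a, b}ᶜ 1 = Set.univ := skewStep_compl_pair_of_adj hab
  have hpt : skewPt G {a, b}ᶜ ≤ 1 := skewPt_le hstep
  have hcard : ({a, b} : Set V)ᶜ.ncard = Nat.card V - 2 := by
    rw [← Set.ncard_add_ncard_compl {a, b}, Set.ncard_pair hab.ne]
    omega
  have htwo : 2 ≤ Nat.card V := Set.ncard_pair hab.ne ▸ Set.ncard_le_card _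
  calc skewTh G ≤ ({a, b} : Set V)ᶜ.ncard + skewPt G {a, b}ᶜ :=
        Nat.sInf_le ⟨_, ⟨1, hstep⟩, rfl⟩
    _ ≤ Nat.card V - 1 := by omega

theorem card_sub_one_le_skewTh [Finite V]
    (h : ∀ S, IsSkewZFS G S → Sᶜ.ncard ≤ 2) : Nat.card V - 1 ≤ skewTh G := by
  refine le_csInf ⟨_, Set.univ, isSkewZFS_univ G, rfl⟩ ?_
  rintro _ ⟨S, hS, rfl⟩
  have hsum := Set.ncard_add_ncard_compl S
  by_cases hSu : S = Set.univ
  · rw [hSu, Set.ncard_univ]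
    omega
  · have := skewPt_pos hS hSu
    have := h S hS
    omega

end SkewForcing

section CompleteMultipartite

variable {ι : Type*} {W : ι → Type*} {a b c : Σ i, W i}

theorem isSkewFort_pair_of_fst_eq (hab : a ≠ b) (h : a.1 = b.1) :
    IsSkewFort (completeMultipartiteGraph W) {a, b} := by
  rintro v w (rfl | rfl) (hvw : v.1 ≠ _)
  · exact ⟨b, by simp, hab.symm, (h ▸ hvw : v.1 ≠ b.1)⟩
  · exact ⟨a, by simp, hab, (h ▸ hvw : v.1 ≠ a.1)⟩

theorem isSkewFort_triple_of_fst_ne (hab : a.1 ≠ b.1) (hac : a.1 ≠ c.1) (hbc : b.1 ≠ c.1) :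
    IsSkewFort (completeMultipartiteGraph W) {a, b, c} := by
  rintro v w hw (hvw : v.1 ≠ w.1)
  simp only [Set.mem_insert_iff, Set.mem_singleton_iff, exists_eq_or_imp, exists_eq_left]
  show (a ≠ w ∧ v.1 ≠ a.1) ∨ (b ≠ w ∧ v.1 ≠ b.1) ∨ (c ≠ w ∧ v.1 ≠ c.1)
  grind

theorem exists_isSkewFort_subset_triple (hab : a ≠ b) (hac : a ≠ c) (hbc : b ≠ c) :
    ∃ F ⊆ {a, b, c}, F.Nonempty ∧ IsSkewFort (completeMultipartiteGraph W) F := by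
  by_cases hab' : a.1 = b.1
  · exact ⟨{a, b}, Set.insert_subset_insert (Set.singleton_subset_iff.2 (Set.mem_insert _ _)),
      by simp, isSkewFort_pair_of_fst_eq hab hab'⟩
  by_cases hac' : a.1 = c.1
  · exact ⟨{a, c}, Set.insert_subset_insert (Set.subset_insert _ _), by simp,
      isSkewFort_pair_of_fst_eq hac hac'⟩
  by_cases hbc' : b.1 = c.1
  · exact ⟨{b, c}, Set.subset_insert _ _, by simp, isSkewFort_pair_of_fst_eq hbc hbc'⟩
  exact ⟨_, subset_rfl, by simp, isSkewFort_triple_of_fst_ne hab' hac' hbc'⟩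

theorem ncard_compl_le_two_of_isSkewZFS [Finite (Σ i, W i)] {S : Set (Σ i, W i)}
    (hS : IsSkewZFS (completeMultipartiteGraph W) S) : Sᶜ.ncard ≤ 2 := by
  by_contra! h
  obtain ⟨a, ha, b, hb, c, hc, hab, hac, hbc⟩ := (Set.two_lt_ncard (Set.toFinite _)).1 h
  obtain ⟨F, hFabc, hne, hF⟩ := exists_isSkewFort_subset_triple hab hac hbc
  have habc : {a, b, c} ⊆ Sᶜ := by
    simp only [Set.insert_subset_iff, Set.singleton_subset_iff]
    exact ⟨ha, hb, hc⟩
  exact hF.not_isSkewZFS hne (Set.subset_compl_iff_disjoint_right.1 (hFabc.trans habc)) hS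

end CompleteMultipartite

/-- complete multipartite graphs have `th₋ = n - 1`. -/
theorem skewTh_completeMultipartite (s : ℕ) (hs : 2 ≤ s) (n : Fin s → ℕ)
    (hn : ∀ i, 1 ≤ n i) :
    skewTh (completeMultipartiteGraph (fun i => Fin (n i))) = (∑ i, n i) - 1 := by
  have hcard : Nat.card (Σ i, Fin (n i)) = ∑ i, n i := by
    simp [Nat.card_eq_fintype_card, Fintype.card_sigma]
  let i₀ : Fin s := ⟨0, by omega⟩
  let i₁ : Fin s := ⟨1, by omega⟩
  have hadj : (completeMultipartiteGraph (fun i => Fin (n i))).Adj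
      ⟨i₀, ⟨0, hn i₀⟩⟩ ⟨i₁, ⟨0, hn i₁⟩⟩ := by
    simp [i₀, i₁]
  rw [← hcard]
  exact le_antisymm (skewTh_le_card_sub_one hadj)
    (card_sub_one_le_skewTh fun _ => ncard_compl_le_two_of_isSkewZFS)
end

section
/- For all n ≥ 3, the path P_n on n vertices satisfies th_-(P_n) = ⌈√(2(n+1)) − 3/2⌉. -/
open SimpleGraph

lemma skewStep_path {n : ℕ} (hn : 3 ≤ n) (B : Set (Fin n)) (w : Fin n) :
    w ∈ skewStep (pathGraph n) B ↔
      w ∈ B ∨ w.val = 1 ∨ w.val + 2 = n ∨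
        (∃ x ∈ B, w.val = x.val + 2 ∨ x.val = w.val + 2) := by
  constructor
  · rintro (hB | ⟨v, hadj, hforce⟩)
    · exact Or.inl hB
    rw [pathGraph_adj] at hadj
    rcases hadj with hv | hv
    · -- v + 1 = w, so v = w - 1
      by_cases h1 : w.val = 1
      · exact Or.inr (Or.inl h1)
      have hw2 : 2 ≤ w.val := by omega
      set u : Fin n := ⟨w.val - 2, by omega⟩ with hu
      have hadj2 : (pathGraph n).Adj v u := by
        rw [pathGraph_adj]; right; simp [hu]; omega
      by_cases hub : u ∈ B
      · exact Or.inr <| Or.inr <| Or.inr ⟨u, hub, Or.inl (by simp [hu]; omega)⟩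
      · have := hforce u hadj2 hub
        exfalso
        have : u.val = w.val := by rw [this]
        simp [hu] at this; omega
    · -- w + 1 = v
      by_cases h2 : w.val + 2 = n
      · exact Or.inr (Or.inr (Or.inl h2))
      have hlt : w.val + 2 < n := by omega
      set u : Fin n := ⟨w.val + 2, hlt⟩ with hu
      have hadj2 : (pathGraph n).Adj v u := by
        rw [pathGraph_adj]; left; simp [hu]; omega
      by_cases hub : u ∈ B
      · exact Or.inr <| Or.inr <| Or.inr ⟨u, hub, Or.inr (by simp [hu])⟩
      · have := hforce u hadj2 hub
        exfalso
        have : u.val = w.val := by rw [this]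
        simp [hu] at this
  · rintro (hB | h1 | h2 | ⟨x, hx, hxw | hxw⟩)
    · exact Or.inl hB
    · refine Or.inr ⟨⟨0, by omega⟩, ?_, ?_⟩
      · rw [pathGraph_adj]; left; simp [h1]
      · intro u hadj _
        rw [pathGraph_adj] at hadj
        apply Fin.ext; simp at hadj ⊢; omega
    · refine Or.inr ⟨⟨w.val + 1, by omega⟩, ?_, ?_⟩
      · rw [pathGraph_adj]; right; simp
      · intro u hadj _
        rw [pathGraph_adj] at hadj
        apply Fin.ext; simp at hadj ⊢
        have := u.isLt; omega
    · -- w = x + 2 : forcer v = w - 1 = x + 1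
      refine Or.inr ⟨⟨w.val - 1, by omega⟩, ?_, ?_⟩
      · rw [pathGraph_adj]; left; simp; omega
      · intro u hadj hub
        rw [pathGraph_adj] at hadj
        simp at hadj
        rcases hadj with h | h
        · apply Fin.ext; omega
        · exfalso; apply hub
          have : u = x := by apply Fin.ext; omega
          rwa [this]
    · -- x = w + 2 : forcer v = w + 1
      refine Or.inr ⟨⟨w.val + 1, by omega⟩, ?_, ?_⟩
      · rw [pathGraph_adj]; right; simp
      · intro u hadj hub
        rw [pathGraph_adj] at hadj
        simp at hadj
        rcases hadj with h | h
        · exfalso; apply hub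
          have : u = x := by apply Fin.ext; omega
          rwa [this]
        · apply Fin.ext; omega

def Dset (n : ℕ) (S : Set (Fin n)) (t : ℕ) : Set (Fin n) :=
  {w | (∃ r ∈ S, ∃ j ≤ t, (w.val = r.val + 2*j ∨ r.val = w.val + 2*j)) ∨
       (∃ j, 1 ≤ j ∧ j ≤ t ∧ w.val + 1 = 2*j) ∨
       (∃ j, 1 ≤ j ∧ j ≤ t ∧ w.val + 2*j = n)}

lemma skewIter_path {n : ℕ} (hn : 3 ≤ n) (S : Set (Fin n)) (t : ℕ) :
    skewIter (pathGraph n) S t = Dset n S t := by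
  induction t with
  | zero =>
    ext w
    simp only [skewIter, Dset, Set.mem_setOf_eq]
    constructor
    · intro hw; exact Or.inl ⟨w, hw, 0, le_refl _, Or.inl (by omega)⟩
    · rintro (⟨r, hr, j, hj, h | h⟩ | ⟨j, h1, h2, _⟩ | ⟨j, h1, h2, _⟩)
      · have : w = r := by apply Fin.ext; omega
        rwa [this]
      · have : w = r := by apply Fin.ext; omega
        rwa [this]
      · omega
      · omega
  | succ t ih =>
    ext w
    rw [show skewIter (pathGraph n) S (t+1) = skewStep (pathGraph n) (skewIter (pathGraph n) S t) from rfl,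
      skewStep_path hn, ih]
    simp only [Dset, Set.mem_setOf_eq]
    constructor
    · rintro (hD | h1 | h2 | ⟨x, hx, hxw⟩)
      · -- monotone
        rcases hD with ⟨r, hr, j, hj, h⟩ | ⟨j, h1, h2, h3⟩ | ⟨j, h1, h2, h3⟩
        · exact Or.inl ⟨r, hr, j, by omega, h⟩
        · exact Or.inr (Or.inl ⟨j, h1, by omega, h3⟩)
        · exact Or.inr (Or.inr ⟨j, h1, by omega, h3⟩)
      · exact Or.inr (Or.inl ⟨1, by omega, by omega, by omega⟩)
      · exact Or.inr (Or.inr ⟨1, by omega, by omega, by omega⟩)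
      · -- x ∈ Dset t, w = x ± 2
        rcases hx with ⟨r, hr, j, hj, h | h⟩ | ⟨j, h1, h2, h3⟩ | ⟨j, h1, h2, h3⟩
        · -- x = r + 2j
          rcases hxw with hw | hw
          · exact Or.inl ⟨r, hr, j+1, by omega, Or.inl (by omega)⟩
          · -- x = w + 2
            rcases Nat.eq_zero_or_pos j with h0 | h0
            · exact Or.inl ⟨r, hr, 1, by omega, Or.inr (by omega)⟩
            · exact Or.inl ⟨r, hr, j-1, by omega, Or.inl (by omega)⟩
        · -- r = x + 2j
          rcases hxw with hw | hw
          · rcases Nat.eq_zero_or_pos j with h0 | h0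
            · exact Or.inl ⟨r, hr, 1, by omega, Or.inl (by omega)⟩
            · exact Or.inl ⟨r, hr, j-1, by omega, Or.inr (by omega)⟩
          · exact Or.inl ⟨r, hr, j+1, by omega, Or.inr (by omega)⟩
        · -- x + 1 = 2j
          rcases hxw with hw | hw
          · exact Or.inr (Or.inl ⟨j+1, by omega, by omega, by omega⟩)
          · -- x = w + 2, w + 1 = 2(j-1), need j ≥ 2
            exact Or.inr (Or.inl ⟨j-1, by omega, by omega, by omega⟩)
        · -- x + 2j = n
          rcases hxw with hw | hw
          · -- w = x + 2: w + 2(j-1) = n, j ≥ 2 since w < n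
            have := w.isLt
            exact Or.inr (Or.inr ⟨j-1, by omega, by omega, by omega⟩)
          · exact Or.inr (Or.inr ⟨j+1, by omega, by omega, by omega⟩)
    · rintro (⟨r, hr, j, hj, h⟩ | ⟨j, h1, h2, h3⟩ | ⟨j, h1, h2, h3⟩)
      · rcases Nat.lt_or_ge j (t+1) with hjt | hjt
        · exact Or.inl (Or.inl ⟨r, hr, j, by omega, h⟩)
        · have hj' : j = t + 1 := by omega
          rcases h with hw | hw
          · -- w = r + 2j, j ≥ 1; x := w - 2
            have hrlt := r.isLt
            refine Or.inr <| Or.inr <| Or.inr ⟨⟨w.val - 2, by omega⟩, ?_, Or.inl (by simp; omega)⟩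
            exact Or.inl ⟨r, hr, j-1, by omega, Or.inl (by simp; omega)⟩
          · -- r = w + 2j; x := w + 2
            have hrlt := r.isLt
            refine Or.inr <| Or.inr <| Or.inr ⟨⟨w.val + 2, by omega⟩, ?_, Or.inr (by simp)⟩
            exact Or.inl ⟨r, hr, j-1, by omega, Or.inr (by simp; omega)⟩
      · rcases Nat.lt_or_ge j (t+1) with hjt | hjt
        · exact Or.inl (Or.inr (Or.inl ⟨j, h1, by omega, h3⟩))
        · rcases Nat.eq_or_lt_of_le h1 with h1' | h1'
          · exact Or.inr (Or.inl (by omega))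
          · refine Or.inr <| Or.inr <| Or.inr ⟨⟨w.val - 2, by omega⟩, ?_, Or.inl (by simp; omega)⟩
            exact Or.inr (Or.inl ⟨j-1, by omega, by omega, by simp; omega⟩)
      · rcases Nat.lt_or_ge j (t+1) with hjt | hjt
        · exact Or.inl (Or.inr (Or.inr ⟨j, h1, by omega, h3⟩))
        · rcases Nat.eq_or_lt_of_le h1 with h1' | h1'
          · exact Or.inr (Or.inr (Or.inl (by omega)))
          · refine Or.inr <| Or.inr <| Or.inr ⟨⟨w.val + 2, by omega⟩, ?_, Or.inr (by simp)⟩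
            exact Or.inr (Or.inr ⟨j-1, by omega, by omega, by simp; omega⟩)

lemma card_bound {n p : ℕ} (hn : 3 ≤ n) (S : Set (Fin n))
    (h : Dset n S p = Set.univ) : n ≤ S.ncard * (2*p+1) + 2*p := by
  classical
  haveI : Fintype ↥S := S.toFinite.fintype
  have hcard : Fintype.card ↥S = S.ncard := by
    rw [← Nat.card_coe_set_eq, Nat.card_eq_fintype_card]
  let f : (↥S × Fin (2*p+1)) ⊕ (Fin p ⊕ Fin p) → Fin n := fun z =>
    match z with
    | Sum.inl (r, i) =>
        if h2 : 2*p ≤ (r : Fin n).val + 2*i.val ∧ (r : Fin n).val + 2*i.val - 2*p < n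
        then ⟨(r : Fin n).val + 2*i.val - 2*p, h2.2⟩ else (r : Fin n)
    | Sum.inr (Sum.inl j) => if h2 : 2*j.val+1 < n then ⟨2*j.val+1, h2⟩ else ⟨0, by omega⟩
    | Sum.inr (Sum.inr j) => ⟨n - 2*(j.val+1), by omega⟩
  have hsurj : Function.Surjective f := by
    intro w
    have hw : w ∈ Dset n S p := by rw [h]; trivial
    have hwlt := w.isLt
    rcases hw with ⟨r, hr, j, hj, hc | hc⟩ | ⟨j, h1, h2, h3⟩ | ⟨j, h1, h2, h3⟩
    · refine ⟨Sum.inl (⟨r, hr⟩, ⟨p+j, by omega⟩), ?_⟩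
      show (if h2 : _ then _ else _) = w
      rw [dif_pos (by constructor <;> simp <;> omega)]
      apply Fin.ext; simp; omega
    · refine ⟨Sum.inl (⟨r, hr⟩, ⟨p-j, by omega⟩), ?_⟩
      show (if h2 : _ then _ else _) = w
      rw [dif_pos (by constructor <;> simp <;> omega)]
      apply Fin.ext; simp; omega
    · refine ⟨Sum.inr (Sum.inl ⟨j-1, by omega⟩), ?_⟩
      show (if h2 : _ then _ else _) = w
      rw [dif_pos (by simp; omega)]
      apply Fin.ext; simp; omega
    · refine ⟨Sum.inr (Sum.inr ⟨j-1, by omega⟩), ?_⟩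
      apply Fin.ext; show n - 2*(j-1+1) = w.val; omega
  have hle := Fintype.card_le_of_surjective f hsurj
  simp only [Fintype.card_sum, Fintype.card_prod, Fintype.card_fin, hcard] at hle
  omega

def centers (n p se so : ℕ) (hn : 3 ≤ n) : Fin se ⊕ Fin so → Fin n :=
  fun z => match z with
  | Sum.inl i => ⟨2 * min (i.val*(2*p+1)+p) ((n+1)/2 - 1), by
      generalize i.val*(2*p+1)+p = z
      have := min_le_right z ((n+1)/2-1); omega⟩
  | Sum.inr i => ⟨2 * min (p + i.val*(2*p+1) + p) (n/2 - 1) + 1, by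
      generalize p + i.val*(2*p+1) + p = z
      have := min_le_right z (n/2-1); omega⟩

lemma exists_j (p m a T : ℕ) (h1 : T ≤ m) (h2 : m < T + (2*p+1)) (h3 : m < a) :
    ∃ j ≤ p, (2*m = 2 * min (T+p) (a-1) + 2*j ∨ 2 * min (T+p) (a-1) = 2*m + 2*j) := by
  rcases le_total (T+p) (a-1) with hmin | hmin
  · rw [min_eq_left hmin]
    rcases le_total m (T+p) with hc | hc
    · exact ⟨T+p-m, by omega, Or.inr (by omega)⟩
    · exact ⟨m-(T+p), by omega, Or.inl (by omega)⟩
  · rw [min_eq_right hmin]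
    exact ⟨a-1-m, by omega, Or.inr (by omega)⟩

lemma construction {n p se so : ℕ} (hn : 3 ≤ n) (hp : 1 ≤ p)
    (he : n % 2 = 0 → ((n+1)/2 ≤ se*(2*p+1) + p ∧ n/2 ≤ so*(2*p+1) + p))
    (ho : n % 2 = 1 → ((n+1)/2 ≤ se*(2*p+1) ∧ n/2 ≤ so*(2*p+1) + 2*p)) :
    ∃ S : Set (Fin n), S.ncard ≤ se + so ∧ Dset n S p = Set.univ := by
  classical
  refine ⟨Set.range (centers n p se so hn), ?_, ?_⟩
  · rw [← Set.image_univ]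
    calc (centers n p se so hn '' Set.univ).ncard ≤ Set.univ.ncard :=
          Set.ncard_image_le Set.finite_univ
      _ = se + so := by
          rw [Set.ncard_univ]; simp [Nat.card_eq_fintype_card]
  · ext w
    simp only [Set.mem_univ, iff_true]
    have hwlt := w.isLt
    have hpos : 0 < 2*p+1 := by omega
    rcases Nat.even_or_odd w.val with ⟨m, hm⟩ | ⟨m, hm⟩
    · -- w = 2m (even)
      have hm2 : w.val = 2*m := by omega
      have hma : m < (n+1)/2 := by omega
      by_cases hms : m < se*(2*p+1)
      · have hi : m / (2*p+1) < se := (Nat.div_lt_iff_lt_mul hpos).2 hms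
        have h1 : (m/(2*p+1))*(2*p+1) ≤ m := Nat.div_mul_le_self m (2*p+1)
        have h2 : m < (m/(2*p+1)+1)*(2*p+1) :=
          (Nat.div_lt_iff_lt_mul hpos).1 (Nat.lt_succ_self _)
        have h2' : m < (m/(2*p+1))*(2*p+1) + (2*p+1) := by rw [add_one_mul] at h2; exact h2
        obtain ⟨j, hj, hcase⟩ := exists_j p m ((n+1)/2) ((m/(2*p+1))*(2*p+1)) h1 h2' hma
        refine Or.inl ⟨centers n p se so hn (Sum.inl ⟨m/(2*p+1), hi⟩),
          ⟨Sum.inl ⟨m/(2*p+1), hi⟩, rfl⟩, j, hj, ?_⟩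
        have hcval : (centers n p se so hn (Sum.inl ⟨m/(2*p+1), hi⟩)).val
            = 2 * min ((m/(2*p+1))*(2*p+1)+p) ((n+1)/2 - 1) := rfl
        rw [hcval, hm2]
        exact hcase
      · -- m ≥ se*(2p+1)
        push_neg at hms
        rcases Nat.even_or_odd n with ⟨a, ha⟩ | ⟨a, ha⟩
        · -- n even : right-end coverage
          have hcond := he (by omega)
          refine Or.inr (Or.inr ⟨n/2 - m, by omega, by omega, by omega⟩)
        · -- n odd : contradiction
          have hcond := ho (by omega)
          omega
    · -- w = 2m+1 (odd)
      have hm2 : w.val = 2*m+1 := by omega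
      have hma : m < n/2 := by omega
      by_cases hmp : m < p
      · exact Or.inr (Or.inl ⟨m+1, by omega, by omega, by omega⟩)
      · push_neg at hmp
        by_cases hms : m - p < so*(2*p+1)
        · have hi : (m-p) / (2*p+1) < so := (Nat.div_lt_iff_lt_mul hpos).2 hms
          set i := (m-p)/(2*p+1) with hidef
          have h1 : i*(2*p+1) ≤ m - p := Nat.div_mul_le_self _ _
          have h2 : m - p < (i+1)*(2*p+1) :=
            (Nat.div_lt_iff_lt_mul hpos).1 (Nat.lt_succ_self _)
          have h1' : p + i*(2*p+1) ≤ m := by omega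
          have h2' : m < (p + i*(2*p+1)) + (2*p+1) := by
            rw [add_one_mul] at h2; omega
          obtain ⟨j, hj, hcase⟩ := exists_j p m (n/2) (p + i*(2*p+1)) h1' h2' hma
          refine Or.inl ⟨centers n p se so hn (Sum.inr ⟨i, hi⟩),
            ⟨Sum.inr ⟨i, hi⟩, rfl⟩, j, hj, ?_⟩
          have hcval : (centers n p se so hn (Sum.inr ⟨i, hi⟩)).val
              = 2 * min (p + i*(2*p+1) + p) (n/2 - 1) + 1 := rfl
          rw [hcval, hm2]
          generalize min (p + i*(2*p+1) + p) (n/2 - 1) = z at hcase ⊢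
          omega
        · push_neg at hms
          rcases Nat.even_or_odd n with ⟨a, ha⟩ | ⟨a, ha⟩
          · have hcond := he (by omega)
            omega
          · have hcond := ho (by omega)
            refine Or.inr (Or.inr ⟨n/2 - m, by omega, by omega, by omega⟩)

lemma feas {n k : ℕ} (hn : 3 ≤ n) (hk : 2*n ≤ k*k + 3*k) (hk2 : 2 ≤ k) :
    ∃ p se so, 1 ≤ p ∧ p + se + so = k ∧
      (n % 2 = 0 → ((n+1)/2 ≤ se*(2*p+1) + p ∧ n/2 ≤ so*(2*p+1) + p)) ∧
      (n % 2 = 1 → ((n+1)/2 ≤ se*(2*p+1) ∧ n/2 ≤ so*(2*p+1) + 2*p)) := by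
  rcases Nat.even_or_odd n with ⟨aa, haa⟩ | ⟨aa, haa⟩
  · -- n even
    have hn2 : n % 2 = 0 := by omega
    obtain ⟨q, hq⟩ : ∃ q, q = (2*k+3)/8 := ⟨_, rfl⟩
    have hcases : k+1 = 4*q ∨ k = 4*q ∨ k = 4*q+1 ∨ k = 4*q+2 := by omega
    rcases hcases with hc | hc | hc | hc
    · obtain ⟨q1, rfl⟩ : ∃ q1, q = q1 + 1 := ⟨q-1, by omega⟩
      have hck : k = 4*q1+3 := by omega
      refine ⟨2*q1+1, q1+1, q1+1, by omega, by omega, ?_, by intro h; omega⟩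
      intro _
      have hkk : k*k + 3*k = 16*(q1*q1) + 36*q1 + 18 := by rw [hck]; ring
      constructor
      · have hE : (q1+1)*(2*(2*q1+1)+1) + (2*q1+1) = 4*(q1*q1) + 9*q1 + 4 := by ring
        rw [hE]
        generalize q1*q1 = Q at hkk ⊢
        generalize k*k = K at hk hkk
        omega
      · have hE : (q1+1)*(2*(2*q1+1)+1) + (2*q1+1) = 4*(q1*q1) + 9*q1 + 4 := by ring
        rw [hE]
        generalize q1*q1 = Q at hkk ⊢
        generalize k*k = K at hk hkk
        omega
    · have hck : k = 4*q := by omega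
      refine ⟨2*q, q, q, by omega, by omega, ?_, by intro h; omega⟩
      intro _
      have hkk : k*k + 3*k = 16*(q*q) + 12*q := by rw [hck]; ring
      constructor
      · have hE : (q)*(2*(2*q)+1) + (2*q) = 4*(q*q) + 3*q := by ring
        rw [hE]
        generalize q*q = Q at hkk ⊢
        generalize k*k = K at hk hkk
        omega
      · have hE : (q)*(2*(2*q)+1) + (2*q) = 4*(q*q) + 3*q := by ring
        rw [hE]
        generalize q*q = Q at hkk ⊢
        generalize k*k = K at hk hkk
        omega
    · have hck : k = 4*q+1 := by omega
      refine ⟨2*q+1, q, q, by omega, by omega, ?_, by intro h; omega⟩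
      intro _
      have hkk : k*k + 3*k = 16*(q*q) + 20*q + 4 := by rw [hck]; ring
      constructor
      · have hE : (q)*(2*(2*q+1)+1) + (2*q+1) = 4*(q*q) + 5*q + 1 := by ring
        rw [hE]
        generalize q*q = Q at hkk ⊢
        generalize k*k = K at hk hkk
        omega
      · have hE : (q)*(2*(2*q+1)+1) + (2*q+1) = 4*(q*q) + 5*q + 1 := by ring
        rw [hE]
        generalize q*q = Q at hkk ⊢
        generalize k*k = K at hk hkk
        omega
    · have hck : k = 4*q+2 := by omega
      refine ⟨2*q+2, q, q, by omega, by omega, ?_, by intro h; omega⟩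
      intro _
      have hkk : k*k + 3*k = 16*(q*q) + 28*q + 10 := by rw [hck]; ring
      constructor
      · have hE : (q)*(2*(2*q+2)+1) + (2*q+2) = 4*(q*q) + 7*q + 2 := by ring
        rw [hE]
        generalize q*q = Q at hkk ⊢
        generalize k*k = K at hk hkk
        omega
      · have hE : (q)*(2*(2*q+2)+1) + (2*q+2) = 4*(q*q) + 7*q + 2 := by ring
        rw [hE]
        generalize q*q = Q at hkk ⊢
        generalize k*k = K at hk hkk
        omega
  · -- n odd
    have hn2 : n % 2 = 1 := by omega
    obtain ⟨c, hc⟩ : ∃ c, c = (2*k+7)/8 := ⟨_, rfl⟩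
    obtain ⟨c1, rfl⟩ : ∃ c1, c = c1 + 1 := ⟨c-1, by omega⟩
    have hcases : k+3 = 4*(c1+1) ∨ k+2 = 4*(c1+1) ∨ k+1 = 4*(c1+1) ∨ k = 4*(c1+1) := by omega
    rcases hcases with hcc | hcc | hcc | hcc
    · have hck : k = 4*c1+1 := by omega
      refine ⟨2*c1, c1+1, c1, by omega, by omega, by intro h; omega, ?_⟩
      intro _
      have hkk : k*k + 3*k = 16*(c1*c1) + 20*c1 + 4 := by rw [hck]; ring
      constructor
      · have hE : (c1+1)*(2*(2*c1)+1) = 4*(c1*c1) + 5*c1 + 1 := by ring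
        rw [hE]
        generalize c1*c1 = Q at hkk ⊢
        generalize k*k = K at hk hkk
        omega
      · have hE : (c1)*(2*(2*c1)+1) + 2*(2*c1) = 4*(c1*c1) + 5*c1 := by ring
        rw [hE]
        generalize c1*c1 = Q at hkk ⊢
        generalize k*k = K at hk hkk
        omega
    · have hck : k = 4*c1+2 := by omega
      refine ⟨2*c1+1, c1+1, c1, by omega, by omega, by intro h; omega, ?_⟩
      intro _
      have hkk : k*k + 3*k = 16*(c1*c1) + 28*c1 + 10 := by rw [hck]; ring
      constructor
      · have hE : (c1+1)*(2*(2*c1+1)+1) = 4*(c1*c1) + 7*c1 + 3 := by ring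
        rw [hE]
        generalize c1*c1 = Q at hkk ⊢
        generalize k*k = K at hk hkk
        omega
      · have hE : (c1)*(2*(2*c1+1)+1) + 2*(2*c1+1) = 4*(c1*c1) + 7*c1 + 2 := by ring
        rw [hE]
        generalize c1*c1 = Q at hkk ⊢
        generalize k*k = K at hk hkk
        omega
    · have hck : k = 4*c1+3 := by omega
      refine ⟨2*c1+2, c1+1, c1, by omega, by omega, by intro h; omega, ?_⟩
      intro _
      have hkk : k*k + 3*k = 16*(c1*c1) + 36*c1 + 18 := by rw [hck]; ring
      constructor
      · have hE : (c1+1)*(2*(2*c1+2)+1) = 4*(c1*c1) + 9*c1 + 5 := by ring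
        rw [hE]
        generalize c1*c1 = Q at hkk ⊢
        generalize k*k = K at hk hkk
        omega
      · have hE : (c1)*(2*(2*c1+2)+1) + 2*(2*c1+2) = 4*(c1*c1) + 9*c1 + 4 := by ring
        rw [hE]
        generalize c1*c1 = Q at hkk ⊢
        generalize k*k = K at hk hkk
        omega
    · have hck : k = 4*c1+4 := by omega
      refine ⟨2*c1+3, c1+1, c1, by omega, by omega, by intro h; omega, ?_⟩
      intro _
      have hkk : k*k + 3*k = 16*(c1*c1) + 44*c1 + 28 := by rw [hck]; ring
      constructor
      · have hE : (c1+1)*(2*(2*c1+3)+1) = 4*(c1*c1) + 11*c1 + 7 := by ring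
        rw [hE]
        generalize c1*c1 = Q at hkk ⊢
        generalize k*k = K at hk hkk
        omega
      · have hE : (c1)*(2*(2*c1+3)+1) + 2*(2*c1+3) = 4*(c1*c1) + 11*c1 + 6 := by ring
        rw [hE]
        generalize c1*c1 = Q at hkk ⊢
        generalize k*k = K at hk hkk
        omega

/-- `th₋(Pₙ) = ⌈√(2(n+1)) - 3/2⌉` for `n ≥ 3`. -/
theorem skewTh_pathGraph (n : ℕ) (hn : 3 ≤ n) :
    (skewTh (SimpleGraph.pathGraph n) : ℤ) = ⌈Real.sqrt (2 * (n + 1)) - 3 / 2⌉ := by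

  have hKne : {k : ℕ | 2*n ≤ k*k + 3*k}.Nonempty := ⟨n, show 2*n ≤ n*n + 3*n by nlinarith⟩
  set k0 := sInf {k : ℕ | 2*n ≤ k*k + 3*k} with hk0def
  have hk0mem : 2*n ≤ k0*k0 + 3*k0 := Nat.sInf_mem hKne
  have hk02 : 2 ≤ k0 := by
    by_contra h
    push_neg at h
    interval_cases k0 <;> omega
  -- the throttling candidate set
  have hlower : ∀ m, (∃ S : Set (Fin n), IsSkewZFS (pathGraph n) S ∧
      m = S.ncard + skewPt (pathGraph n) S) → k0 ≤ m := by
    rintro m ⟨S, hZFS, rfl⟩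
    have hne : {t | skewIter (pathGraph n) S t = Set.univ}.Nonempty := hZFS
    have hp : skewIter (pathGraph n) S (skewPt (pathGraph n) S) = Set.univ :=
      Nat.sInf_mem hne
    set p := skewPt (pathGraph n) S with hpdef
    set s := S.ncard with hsdef
    have hD : Dset n S p = Set.univ := by rw [← skewIter_path hn]; exact hp
    have hcount : n ≤ s*(2*p+1) + 2*p := card_bound hn S hD
    apply Nat.sInf_le
    show 2*n ≤ (s+p)*(s+p) + 3*(s+p)
    have htt : (0:ℤ) ≤ ((s:ℤ)-p)*((s:ℤ)-p+1) := by
      rcases le_or_gt (p:ℤ) (s:ℤ) with h | h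
      · apply mul_nonneg <;> omega
      · have hm := mul_nonneg (show (0:ℤ) ≤ (p:ℤ)-s by omega)
          (show (0:ℤ) ≤ (p:ℤ)-s-1 by omega)
        nlinarith [hm]
    zify at hcount ⊢
    nlinarith [hcount, htt]
  have hupper : ∃ m, (∃ S : Set (Fin n), IsSkewZFS (pathGraph n) S ∧
      m = S.ncard + skewPt (pathGraph n) S) ∧ m ≤ k0 := by
    obtain ⟨p, se, so, hp1, hsum, he, ho⟩ := feas hn hk0mem hk02
    obtain ⟨S, hcard, hcover⟩ := construction hn hp1 he ho
    have hforce : skewIter (pathGraph n) S p = Set.univ := by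
      rw [skewIter_path hn]; exact hcover
    have hZFS : IsSkewZFS (pathGraph n) S := ⟨p, hforce⟩
    have hpt : skewPt (pathGraph n) S ≤ p :=
      Nat.sInf_le (show p ∈ {t | skewIter (pathGraph n) S t = Set.univ} from hforce)
    exact ⟨S.ncard + skewPt (pathGraph n) S, ⟨S, hZFS, rfl⟩, by omega⟩
  have hth : skewTh (pathGraph n) = k0 := by
    obtain ⟨m, hmem, hmle⟩ := hupper
    apply le_antisymm
    · calc skewTh (pathGraph n) ≤ m := Nat.sInf_le hmem
        _ ≤ k0 := hmle
    · apply le_csInf ⟨m, hmem⟩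
      intro b hb
      exact hlower b hb
  -- minimality
  obtain ⟨k1, hk1⟩ : ∃ k1, k0 = k1 + 1 := ⟨k0 - 1, by omega⟩
  have hstrict : k1*k1 + 3*k1 < 2*n := by
    by_contra h
    push_neg at h
    have : k0 ≤ k1 := Nat.sInf_le h
    omega
  rw [hth]
  rw [eq_comm, Int.ceil_eq_iff]
  have hcast : ((2:ℝ)*n ≤ (k0:ℝ)*(k0:ℝ) + 3*(k0:ℝ)) := by exact_mod_cast hk0mem
  have hstrict' : k1*k1 + 3*k1 + 1 ≤ 2*n := by omega
  have hcast2 : ((k1:ℝ)*(k1:ℝ) + 3*(k1:ℝ) + 1 ≤ 2*n) := by exact_mod_cast hstrict'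
  have hcast3 : (k0:ℝ) = (k1:ℝ) + 1 := by exact_mod_cast hk1
  constructor
  · -- (k0:ℝ) - 1 < sqrt(2(n+1)) - 3/2
    have h1 : (k0:ℝ) + 1/2 < Real.sqrt (2*(n+1)) := by
      rw [show (2*((n:ℝ)+1)) = ((2:ℝ)*n+2) by ring]
      rw [← Real.sqrt_sq (show (0:ℝ) ≤ (k0:ℝ)+1/2 by positivity)]
      apply Real.sqrt_lt_sqrt (by positivity)
      nlinarith
    push_cast
    push_cast at h1
    linarith
  · have h2 : Real.sqrt (2*((n:ℝ)+1)) ≤ (k0:ℝ) + 3/2 := by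
      rw [← Real.sqrt_sq (show (0:ℝ) ≤ (k0:ℝ)+3/2 by positivity)]
      apply Real.sqrt_le_sqrt
      nlinarith
    push_cast
    push_cast at h2
    linarith
end
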